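/- arXiv:1805.10098 — 4 statements merged into one kernel-verified Lean document; each statement's English description precedes it below -/
import Mathlib

section
/- Every Cantor space (X,d) has the property*: for any ε > 0 there exists δ > 0 such that for any integer n ≥ 1 and any two n-tuples ζ = (x_1,…,x_n), η = (y_1,…,y_n) ∈ X^n whose entries are each pairwise distinct, if max_{1≤i≤n} d(x_i,y_i) < δ, then there exists a homeomorphism φ of X with max(sup_x d(φ(x),x), sup_x d(φ⁻¹(x),x)) < ε and φ(x_i) = y_i for all 1 ≤ i ≤ n. -/
set_option linter.unusedSectionVars false
set_option maxHeartbeats 1000000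


/-! Common definitions: distances on maps/homeomorphisms of a metric space,
topological stability and shadowing-type properties. -/

variable {X : Type*} [MetricSpace X]

/-- The `C⁰`-distance `d_{C⁰}(f,g) = sup_{x ∈ X} d (f x) (g x)` between self-maps. -/
noncomputable def dC0 (f g : X → X) : ℝ :=
  ⨆ x : X, dist (f x) (g x)

/-- The distance `D(f,g) = max (d_{C⁰}(f,g)) (d_{C⁰}(f⁻¹,g⁻¹))` between homeomorphisms. -/
noncomputable def DH (f g : X ≃ₜ X) : ℝ :=
  max (dC0 (f : X → X) (g : X → X)) (dC0 (f.symm : X → X) (g.symm : X → X))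

/-- `f` is topologically stable. -/
def TopologicallyStable (f : X ≃ₜ X) : Prop :=
  ∀ ε > 0, ∃ δ > 0, ∀ g : X ≃ₜ X, DH f g < δ →
    ∃ h : X → X, Continuous h ∧ dC0 h id < ε ∧ h ∘ (g : X → X) = (f : X → X) ∘ h

/-- `f` is topologically stable in the strong sense (the conjugating map is surjective). -/
def STopologicallyStable (f : X ≃ₜ X) : Prop :=
  ∀ ε > 0, ∃ δ > 0, ∀ g : X ≃ₜ X, DH f g < δ →
    ∃ h : X → X, Continuous h ∧ Function.Surjective h ∧ dC0 h id < ε ∧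
      h ∘ (g : X → X) = (f : X → X) ∘ h

/-- `f` has the shadowing property. -/
def HasShadowing (f : X ≃ₜ X) : Prop :=
  ∀ ε > 0, ∃ δ > 0, ∀ x : ℕ → X,
    (∀ i, dist (f (x i)) (x (i + 1)) ≤ δ) →
    ∃ p : X, ∀ i, dist (x i) ((f : X → X)^[i] p) ≤ ε

/-- `f` has the strict periodic shadowing property: every `δ`-cycle of length `m`
is `ε`-shadowed by a point `p` with `f^[m] p = p`. -/
def StrictPeriodicShadowing (f : X ≃ₜ X) : Prop :=
  ∀ ε > 0, ∃ δ > 0, ∀ (m : ℕ) (x : ℕ → X), 1 ≤ m →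
    (∀ i < m, dist (f (x i)) (x (i + 1)) ≤ δ) → x 0 = x m →
    ∃ p : X, (f : X → X)^[m] p = p ∧ ∀ i ≤ m, dist (x i) ((f : X → X)^[i] p) ≤ ε

/-- `f` has the periodic shadowing property: every `δ`-cycle is `ε`-shadowed by
a periodic point of `f`. -/
def PeriodicShadowing (f : X ≃ₜ X) : Prop :=
  ∀ ε > 0, ∃ δ > 0, ∀ (m : ℕ) (x : ℕ → X), 1 ≤ m →
    (∀ i < m, dist (f (x i)) (x (i + 1)) ≤ δ) → x 0 = x m →
    ∃ p ∈ Function.periodicPts (f : X → X), ∀ i ≤ m, dist (x i) ((f : X → X)^[i] p) ≤ ε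

/-- `x` is a chain recurrent point of `f`: for every `δ > 0` there is a `δ`-cycle
of `f` through `x`. -/
def ChainRecurrent (f : X → X) (x : X) : Prop :=
  ∀ δ > 0, ∃ (m : ℕ) (c : ℕ → X), 1 ≤ m ∧ c 0 = x ∧ c m = x ∧
    ∀ i < m, dist (f (c i)) (c (i + 1)) ≤ δ

/-- `f` has the pseudo periodic shadowing property: every `δ`-cycle is `ε`-shadowed
by some (not necessarily periodic) point. -/
def PseudoPeriodicShadowing (f : X → X) : Prop :=
  ∀ ε > 0, ∃ δ > 0, ∀ (m : ℕ) (x : ℕ → X), 1 ≤ m →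
    (∀ i < m, dist (f (x i)) (x (i + 1)) ≤ δ) → x 0 = x m →
    ∃ p : X, ∀ i ≤ m, dist (x i) (f^[i] p) ≤ ε

/-- The property* of a compact metric space. -/
def PropertyStar (Y : Type*) [MetricSpace Y] : Prop :=
  ∀ ε > 0, ∃ δ > 0, ∀ (n : ℕ) (x y : Fin n → Y), 1 ≤ n →
    Function.Injective x → Function.Injective y →
    (∀ i, dist (x i) (y i) < δ) →
    ∃ φ : Y ≃ₜ Y, DH φ (Homeomorph.refl Y) < ε ∧ ∀ i, φ (x i) = y i

/-- `f` is an equicontinuous homeomorphism: the family of all iterates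
`f^n`, `n ∈ ℤ`, is uniformly equicontinuous. -/
def EquicontinuousHomeo (f : X ≃ₜ X) : Prop :=
  ∀ ε > 0, ∃ δ > 0, ∀ x y : X, dist x y ≤ δ →
    ∀ n : ℤ, dist ((f.toEquiv ^ n) x) ((f.toEquiv ^ n) y) ≤ ε

/-- The set of bi-infinite `δ`-pseudo orbits of `f`. -/
def PseudoOrbitsZ (f : X ≃ₜ X) (δ : ℝ) : Set (ℤ → X) :=
  {x | ∀ i : ℤ, dist (f (x i)) (x (i + 1)) ≤ δ}

/-- `f` has the continuous shadowing property. -/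
def ContinuousShadowing (f : X ≃ₜ X) : Prop :=
  ∀ ε > 0, ∃ δ > 0, ∃ r : PseudoOrbitsZ f δ → X, Continuous r ∧
    ∀ x : PseudoOrbitsZ f δ, ∀ i : ℤ,
      dist ((f.toEquiv ^ i) (r x)) ((x : ℤ → X) i) ≤ ε

/-- `x` is a non-wandering point of `f`. -/
def NonWandering (f : X ≃ₜ X) (x : X) : Prop :=
  ∀ U ∈ nhds x, ∃ n : ℕ, 0 < n ∧ ∃ y ∈ U, (f : X → X)^[n] y ∈ U

section CantorStarAux

open Metric Set

variable {Zc : Type*} [MetricSpace Zc] [CompactSpace Zc]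

/-- `L` is a partition of `S` into nonempty clopen pieces of diameter at most `r`. -/
def IsPart (L : List (Set Zc)) (S : Set Zc) (r : ℝ) : Prop :=
  (∀ P ∈ L, IsClopen P ∧ P.Nonempty ∧ Metric.diam P ≤ r) ∧
    L.Pairwise Disjoint ∧ ⋃₀ {P | P ∈ L} = S

/-- Disjointification of a list of sets. -/
def djf : List (Set Zc) → List (Set Zc)
  | [] => []
  | P :: L => P :: (djf L).map (· \ P)

lemma djf_subset : ∀ (L : List (Set Zc)), ∀ Q ∈ djf L, ∃ P ∈ L, Q ⊆ P
  | [], Q, hQ => by simp [djf] at hQ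
  | P :: L, Q, hQ => by
    rcases List.mem_cons.1 hQ with hQ | hQ
    · exact ⟨P, List.mem_cons_self, hQ ▸ subset_rfl⟩
    · rw [List.mem_map] at hQ
      obtain ⟨Q', hQ', rfl⟩ := hQ
      obtain ⟨P', hP', hsub⟩ := djf_subset L Q' hQ'
      exact ⟨P', List.mem_cons_of_mem _ hP', (diff_subset).trans hsub⟩

lemma djf_clopen : ∀ (L : List (Set Zc)), (∀ P ∈ L, IsClopen P) → ∀ Q ∈ djf L, IsClopen Q
  | [], _, Q, hQ => by simp [djf] at hQ
  | P :: L, h, Q, hQ => by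
    rcases List.mem_cons.1 hQ with hQ | hQ
    · exact hQ ▸ h P (List.mem_cons_self)
    · rw [List.mem_map] at hQ
      obtain ⟨Q', hQ', rfl⟩ := hQ
      exact (djf_clopen L (fun P hP => h P (List.mem_cons_of_mem _ hP)) Q' hQ').diff
        (h P (List.mem_cons_self))

lemma djf_pairwise : ∀ (L : List (Set Zc)), (djf L).Pairwise Disjoint
  | [] => by simp [djf]
  | P :: L => by
    refine List.Pairwise.cons ?_ (List.Pairwise.map _ ?_ (djf_pairwise L))
    · intro Q hQ
      rw [List.mem_map] at hQ
      obtain ⟨Q', _, rfl⟩ := hQ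
      exact Set.disjoint_sdiff_right
    · intro a b hab
      exact hab.mono diff_subset diff_subset

lemma djf_union : ∀ (L : List (Set Zc)), ⋃₀ {P | P ∈ djf L} = ⋃₀ {P | P ∈ L}
  | [] => by simp [djf]
  | P :: L => by
    ext x
    simp only [djf, Set.mem_sUnion, Set.mem_setOf_eq, List.mem_cons, List.mem_map]
    constructor
    · rintro ⟨Q, rfl | ⟨Q', hQ', rfl⟩, hx⟩
      · exact ⟨Q, Or.inl rfl, hx⟩
      · have : x ∈ ⋃₀ {P | P ∈ djf L} := ⟨Q', hQ', hx.1⟩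
        rw [djf_union L] at this
        obtain ⟨R, hR, hxR⟩ := this
        exact ⟨R, Or.inr hR, hxR⟩
    · rintro ⟨Q, hQ | hQ, hx⟩
      · exact ⟨P, Or.inl rfl, hQ ▸ hx⟩
      · by_cases hxP : x ∈ P
        · exact ⟨P, Or.inl rfl, hxP⟩
        · have : x ∈ ⋃₀ {R | R ∈ djf L} := by rw [djf_union L]; exact ⟨Q, hQ, hx⟩
          obtain ⟨R, hR, hxR⟩ := this
          exact ⟨R \ P, Or.inr ⟨R, hR, rfl⟩, hxR, hxP⟩

variable [PerfectSpace Zc] [TotallyDisconnectedSpace Zc]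

lemma aux_open_infinite' {S : Set Zc} (hS : IsOpen S) (hne : S.Nonempty) : S.Infinite := by
  obtain ⟨x, hx⟩ := hne
  exact infinite_of_mem_nhds x (hS.mem_nhds hx)

lemma aux_split' {S : Set Zc} (hS : IsClopen S) {s : Zc} (hs : s ∈ S) :
    ∃ S₁ S₂ : Set Zc, IsClopen S₁ ∧ IsClopen S₂ ∧ S₁.Nonempty ∧ S₂.Nonempty ∧
      Disjoint S₁ S₂ ∧ S₁ ∪ S₂ = S ∧ s ∈ S₁ := by
  have hinf : S.Infinite := aux_open_infinite' hS.2 ⟨s, hs⟩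
  obtain ⟨v, hv⟩ := (hinf.diff (Set.finite_singleton s)).nonempty
  have hvS : v ∈ S := hv.1
  have hvs : v ≠ s := by simpa using hv.2
  obtain ⟨V, hV, hsV, hVsub⟩ :=
    compact_exists_isClopen_in_isOpen (hS.2.inter (isOpen_ball : IsOpen (ball s (dist v s))))
      (⟨hs, mem_ball_self (dist_pos.2 hvs)⟩)
  refine ⟨V, S \ V, hV, hS.diff hV, ⟨s, hsV⟩, ⟨v, hvS, ?_⟩, Set.disjoint_sdiff_right, ?_, hsV⟩
  · intro hvV
    have := (hVsub hvV).2
    simp [mem_ball] at this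
  · rw [Set.union_diff_cancel (fun x hx => (hVsub hx).1)]

/-- Basic existence: partition a nonempty clopen set into nonempty clopen pieces of small diam. -/
lemma aux_part_exists {S : Set Zc} (hS : IsClopen S) (hne : S.Nonempty) {r : ℝ} (hr : 0 < r) :
    ∃ L : List (Set Zc), IsPart L S r := by
  classical
  -- clopen cover of S by small pieces
  have hcov : ∀ x : S, ∃ V : Set Zc, IsClopen V ∧ (x : Zc) ∈ V ∧ V ⊆ S ∩ ball (x : Zc) (r / 2) := by
    rintro ⟨x, hx⟩
    exact compact_exists_isClopen_in_isOpen (hS.2.inter isOpen_ball)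
      ⟨hx, mem_ball_self (by linarith)⟩
  choose V hVclopen hVmem hVsub using hcov
  have hScomp : IsCompact S := hS.1.isCompact
  obtain ⟨t, ht⟩ := hScomp.elim_finite_subcover V (fun i => (hVclopen i).2)
    (fun x hx => Set.mem_iUnion.2 ⟨⟨x, hx⟩, hVmem ⟨x, hx⟩⟩)
  set L0 : List (Set Zc) := t.toList.map V with hL0
  have hL0mem : ∀ P ∈ L0, IsClopen P ∧ P ⊆ S ∧ Metric.diam P ≤ r := by
    intro P hP
    rw [hL0, List.mem_map] at hP
    obtain ⟨i, _, rfl⟩ := hP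
    refine ⟨hVclopen i, (hVsub i).trans inter_subset_left, ?_⟩
    calc Metric.diam (V i) ≤ Metric.diam (ball (i : Zc) (r/2)) :=
          Metric.diam_mono ((hVsub i).trans inter_subset_right) isBounded_ball
      _ ≤ 2 * (r/2) := Metric.diam_ball (by linarith)
      _ = r := by ring
  -- disjointify and filter empties
  set L1 : List (Set Zc) := (djf L0).filter (fun P => P ≠ ∅) with hL1
  refine ⟨L1, ⟨?_, ?_, ?_⟩⟩
  · intro P hP
    rw [hL1, List.mem_filter] at hP
    obtain ⟨hPd, hPne⟩ := hP
    obtain ⟨Q, hQ, hPQ⟩ := djf_subset L0 P hPd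
    refine ⟨djf_clopen L0 (fun R hR => (hL0mem R hR).1) P hPd,
      Set.nonempty_iff_ne_empty.2 (by simpa using hPne), ?_⟩
    exact le_trans (Metric.diam_mono hPQ isBounded_of_compactSpace) (hL0mem Q hQ).2.2
  · exact (djf_pairwise L0).sublist (List.filter_sublist)
  · have h1 : ⋃₀ {P | P ∈ L1} = ⋃₀ {P | P ∈ djf L0} := by
      ext x
      simp only [Set.mem_sUnion, Set.mem_setOf_eq]
      constructor
      · rintro ⟨P, hP, hx⟩
        exact ⟨P, (List.mem_filter.1 hP).1, hx⟩
      · rintro ⟨P, hP, hx⟩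
        refine ⟨P, List.mem_filter.2 ⟨hP, ?_⟩, hx⟩
        simp only [ne_eq, decide_eq_true_eq]
        exact Set.nonempty_iff_ne_empty.1 ⟨x, hx⟩
    rw [h1, djf_union L0]
    apply Set.Subset.antisymm
    · rintro x ⟨P, hP, hx⟩
      simp only [Set.mem_setOf_eq, hL0, List.mem_map] at hP
      obtain ⟨i, _, rfl⟩ := hP
      exact ((hVsub i).trans inter_subset_left) hx
    · intro x hx
      have := ht hx
      rw [Set.mem_iUnion₂] at this
      obtain ⟨i, hi, hxi⟩ := this
      refine ⟨V i, ?_, hxi⟩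
      simp only [Set.mem_setOf_eq, hL0, List.mem_map]
      exact ⟨i, by simpa using hi, rfl⟩

/-- Partition with a marked point in the head. -/
lemma aux_part_pt {S : Set Zc} (hS : IsClopen S) {s : Zc} (hs : s ∈ S) {r : ℝ} (hr : 0 < r) :
    ∃ (P : Set Zc) (L : List (Set Zc)), IsPart (P :: L) S r ∧ s ∈ P := by
  classical
  obtain ⟨L, hL⟩ := aux_part_exists hS ⟨s, hs⟩ hr
  obtain ⟨P, hPL, hsP⟩ : ∃ P ∈ L, s ∈ P := by
    have : s ∈ ⋃₀ {P | P ∈ L} := hL.2.2.symm ▸ hs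
    obtain ⟨P, hP, h⟩ := this; exact ⟨P, hP, h⟩
  have hperm : L.Perm (P :: L.erase P) := List.perm_cons_erase hPL
  refine ⟨P, L.erase P, ⟨?_, ?_, ?_⟩, hsP⟩
  · intro Q hQ; exact hL.1 Q (hperm.mem_iff.2 hQ)
  · exact (hperm.pairwise_iff (fun {_ _} h => Disjoint.symm h)).1 hL.2.1
  · rw [← hL.2.2]; ext x
    simp only [Set.mem_sUnion, Set.mem_setOf_eq]
    exact ⟨fun ⟨Q, hQ, hx⟩ => ⟨Q, hperm.mem_iff.2 hQ, hx⟩,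
           fun ⟨Q, hQ, hx⟩ => ⟨Q, hperm.mem_iff.1 hQ, hx⟩⟩

/-- Grow a partition by one piece, keeping the marked point in the head. -/
lemma aux_part_grow {S : Set Zc} {P : Set Zc} {L : List (Set Zc)} {s : Zc} {r : ℝ}
    (h : IsPart (P :: L) S r) (hs : s ∈ P) :
    ∃ (P' : Set Zc) (L' : List (Set Zc)), IsPart (P' :: L') S r ∧ s ∈ P' ∧
      (P' :: L').length = (P :: L).length + 1 := by
  obtain ⟨hP, hPne, hPd⟩ := h.1 P (List.mem_cons_self)
  obtain ⟨S₁, S₂, h1, h2, hn1, hn2, hdisj, huni, hs1⟩ := aux_split' hP hs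
  have hsub1 : S₁ ⊆ P := huni ▸ Set.subset_union_left
  have hsub2 : S₂ ⊆ P := huni ▸ Set.subset_union_right
  refine ⟨S₁, S₂ :: L, ⟨?_, ?_, ?_⟩, hs1, rfl⟩
  · intro Q hQ
    rcases List.mem_cons.1 hQ with rfl | hQ
    · exact ⟨h1, hn1, le_trans (Metric.diam_mono hsub1 isBounded_of_compactSpace) hPd⟩
    rcases List.mem_cons.1 hQ with rfl | hQ
    · exact ⟨h2, hn2, le_trans (Metric.diam_mono hsub2 isBounded_of_compactSpace) hPd⟩
    · exact h.1 Q (List.mem_cons_of_mem _ hQ)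
  · have hPL : ∀ Q ∈ L, Disjoint P Q := fun Q hQ => (List.pairwise_cons.1 h.2.1).1 Q hQ
    refine List.Pairwise.cons ?_ (List.Pairwise.cons ?_ (List.pairwise_cons.1 h.2.1).2)
    · intro Q hQ
      rcases List.mem_cons.1 hQ with rfl | hQ
      · exact hdisj
      · exact (hPL Q hQ).mono_left hsub1
    · intro Q hQ
      exact (hPL Q hQ).mono_left hsub2
  · rw [← h.2.2]; ext x
    simp only [Set.mem_sUnion, Set.mem_setOf_eq, List.mem_cons]
    constructor
    · rintro ⟨Q, rfl | rfl | hQ, hx⟩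
      · exact ⟨P, Or.inl rfl, hsub1 hx⟩
      · exact ⟨P, Or.inl rfl, hsub2 hx⟩
      · exact ⟨Q, Or.inr hQ, hx⟩
    · rintro ⟨Q, rfl | hQ, hx⟩
      · rw [← huni] at hx
        rcases hx with hx | hx
        · exact ⟨S₁, Or.inl rfl, hx⟩
        · exact ⟨S₂, Or.inr (Or.inl rfl), hx⟩
      · exact ⟨Q, Or.inr (Or.inr hQ), hx⟩

/-- Partition with a marked point in the head, of any length at least some bound. -/
lemma aux_part_ge {S : Set Zc} (hS : IsClopen S) {s : Zc} (hs : s ∈ S) {r : ℝ} (hr : 0 < r) :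
    ∃ m : ℕ, ∀ k, m ≤ k → ∃ (P : Set Zc) (L : List (Set Zc)),
      IsPart (P :: L) S r ∧ s ∈ P ∧ (P :: L).length = k := by
  obtain ⟨P, L, hPL, hsP⟩ := aux_part_pt hS hs hr
  refine ⟨(P :: L).length, fun k hk => ?_⟩
  obtain ⟨j, rfl⟩ := Nat.exists_eq_add_of_le hk
  clear hk
  induction j with
  | zero => exact ⟨P, L, hPL, hsP, rfl⟩
  | succ j ih =>
    obtain ⟨P', L', h', hs', hlen⟩ := ih
    obtain ⟨P'', L'', h'', hs'', hlen'⟩ := aux_part_grow h' hs'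
    exact ⟨P'', L'', h'', hs'', by rw [hlen', hlen]; omega⟩

/-- The synchronized step lemma: simultaneous equal-length partitions of two pointed
nonempty clopen sets. -/
lemma aux_step {S T : Set Zc} (hS : IsClopen S) (hT : IsClopen T) {s t : Zc}
    (hs : s ∈ S) (ht : t ∈ T) {r : ℝ} (hr : 0 < r) :
    ∃ (PS PT : Set Zc) (LS LT : List (Set Zc)),
      IsPart (PS :: LS) S r ∧ IsPart (PT :: LT) T r ∧ s ∈ PS ∧ t ∈ PT ∧
      (PS :: LS).length = (PT :: LT).length := by
  obtain ⟨m1, h1⟩ := aux_part_ge hS hs hr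
  obtain ⟨m2, h2⟩ := aux_part_ge hT ht hr
  obtain ⟨PS, LS, hS', hsS, hlen1⟩ := h1 (max m1 m2) (le_max_left _ _)
  obtain ⟨PT, LT, hT', htT, hlen2⟩ := h2 (max m1 m2) (le_max_right _ _)
  exact ⟨PS, PT, LS, LT, hS', hT', hsS, htT, by rw [hlen1, hlen2]⟩

section ListAux
variable {α : Type*}

lemma getD_mem_of_lt {l : List (Set α)} {j : ℕ} (h : j < l.length) : l.getD j ∅ ∈ l := by
  rw [List.getD_eq_getElem l ∅ h]
  exact List.getElem_mem h

lemma getD_eq_empty_of_ge {l : List (Set α)} {j : ℕ} (h : l.length ≤ j) : l.getD j ∅ = ∅ :=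
  List.getD_eq_default l ∅ (by omega)

lemma getD_subset_sUnion {l : List (Set α)} (j : ℕ) : l.getD j ∅ ⊆ ⋃₀ {P | P ∈ l} := by
  by_cases h : j < l.length
  · exact fun x hx => ⟨l.getD j ∅, getD_mem_of_lt h, hx⟩
  · rw [getD_eq_empty_of_ge (by omega)]; exact empty_subset _

lemma getD_disjoint {l : List (Set α)} (hp : l.Pairwise Disjoint) {i j : ℕ} (hij : i ≠ j) :
    Disjoint (l.getD i ∅) (l.getD j ∅) := by
  by_cases hi : i < l.length
  · by_cases hj : j < l.length
    · rw [List.getD_eq_getElem l ∅ hi, List.getD_eq_getElem l ∅ hj]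
      rcases Nat.lt_or_ge i j with h | h
      · exact List.pairwise_iff_getElem.1 hp i j hi hj h
      · exact (List.pairwise_iff_getElem.1 hp j i hj hi (by omega)).symm
    · rw [getD_eq_empty_of_ge (le_of_not_gt hj)]; exact disjoint_empty _
  · rw [getD_eq_empty_of_ge (le_of_not_gt hi)]; exact empty_disjoint _

lemma sUnion_exists_getD {l : List (Set α)} {x : α} (hx : x ∈ ⋃₀ {P | P ∈ l}) :
    ∃ j, x ∈ l.getD j ∅ := by
  obtain ⟨P, hP, hxP⟩ := hx
  obtain ⟨j, hj, rfl⟩ := List.getElem_of_mem hP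
  exact ⟨j, by rwa [List.getD_eq_getElem l ∅ hj]⟩

end ListAux

section Tree
open scoped Classical

variable {Y : Type*} [MetricSpace Y] [CompactSpace Y] [PerfectSpace Y]
  [TotallyDisconnectedSpace Y]

/-- A wrapper of `aux_step` whose output is one pair. -/
lemma aux_step' {S T : Set Y} (hS : IsClopen S) (hT : IsClopen T) {s t : Y}
    (hs : s ∈ S) (ht : t ∈ T) {r : ℝ} (hr : 0 < r) :
    ∃ p : List (Set Y) × List (Set Y),
      IsPart p.1 S r ∧ IsPart p.2 T r ∧ p.1.length = p.2.length ∧ 0 < p.1.length ∧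
      s ∈ p.1.getD 0 ∅ ∧ t ∈ p.2.getD 0 ∅ := by
  obtain ⟨PS, PT, LS, LT, h1, h2, hs', ht', hlen⟩ := aux_step hS hT hs ht hr
  exact ⟨(PS :: LS, PT :: LT), h1, h2, hlen, Nat.succ_pos _, hs', ht'⟩

/-- A marked point of a set: `a` if it belongs, otherwise anything. -/
noncomputable def markPt (a : Y) (S : Set Y) (h : S.Nonempty) : Y := by
  classical exact if a ∈ S then a else h.some

lemma markPt_mem (a : Y) (S : Set Y) (h : S.Nonempty) : markPt a S h ∈ S := by
  unfold markPt; split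
  · assumption
  · exact h.some_mem

lemma markPt_eq {a : Y} {S : Set Y} (h : S.Nonempty) (ha : a ∈ S) : markPt a S h = a := by
  unfold markPt; split
  · rfl
  · exact absurd ha (by assumption)

/-- One subdivision step used in the tree construction. -/
noncomputable def stepL (a b : Y) (S T : Set Y) (r : ℝ) : List (Set Y) × List (Set Y) := by
  classical
  exact if h : IsClopen S ∧ IsClopen T ∧ S.Nonempty ∧ T.Nonempty ∧ 0 < r then
    (aux_step' h.1 h.2.1 (markPt_mem a S h.2.2.1) (markPt_mem b T h.2.2.2.1) h.2.2.2.2).choose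
  else ([], [])

lemma stepL_spec {a b : Y} {S T : Set Y} {r : ℝ}
    (hS : IsClopen S) (hT : IsClopen T) (hSne : S.Nonempty) (hTne : T.Nonempty) (hr : 0 < r) :
    IsPart (stepL a b S T r).1 S r ∧ IsPart (stepL a b S T r).2 T r ∧
    (stepL a b S T r).1.length = (stepL a b S T r).2.length ∧
    0 < (stepL a b S T r).1.length ∧
    (a ∈ S → a ∈ (stepL a b S T r).1.getD 0 ∅) ∧
    (b ∈ T → b ∈ (stepL a b S T r).2.getD 0 ∅) := by
  classical
  have h : IsClopen S ∧ IsClopen T ∧ S.Nonempty ∧ T.Nonempty ∧ 0 < r :=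
    ⟨hS, hT, hSne, hTne, hr⟩
  have he := (aux_step' h.1 h.2.1 (markPt_mem a S h.2.2.1) (markPt_mem b T h.2.2.2.1)
    h.2.2.2.2).choose_spec
  rw [stepL, dif_pos h]
  refine ⟨he.1, he.2.1, he.2.2.1, he.2.2.2.1, fun ha => ?_, fun hb => ?_⟩
  · exact Set.mem_of_eq_of_mem (markPt_eq _ ha).symm he.2.2.2.2.1
  · exact Set.mem_of_eq_of_mem (markPt_eq _ hb).symm he.2.2.2.2.2

variable (a b : Y) (A B : Set Y)

/-- The tree of synchronized partitions. Children of node `l` are `j :: l`. -/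
noncomputable def nodes : List ℕ → Set Y × Set Y
  | [] => (A, B)
  | j :: l =>
      ((stepL a b (nodes l).1 (nodes l).2 ((1/2) ^ (l.length + 1))).1.getD j ∅,
       (stepL a b (nodes l).1 (nodes l).2 ((1/2) ^ (l.length + 1))).2.getD j ∅)

/-- A node is good if both sides are nonempty and clopen. -/
def GoodN (l : List ℕ) : Prop :=
  (nodes a b A B l).1.Nonempty ∧ (nodes a b A B l).2.Nonempty ∧
    IsClopen (nodes a b A B l).1 ∧ IsClopen (nodes a b A B l).2

variable {a b A B}

lemma child_subset_1 (l : List ℕ) (j : ℕ) :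
    (nodes a b A B (j :: l)).1 ⊆ (nodes a b A B l).1 := by
  by_cases h : IsClopen (nodes a b A B l).1 ∧ IsClopen (nodes a b A B l).2 ∧
      (nodes a b A B l).1.Nonempty ∧ (nodes a b A B l).2.Nonempty ∧
      (0:ℝ) < (1/2) ^ (l.length + 1)
  · have hs := stepL_spec (a := a) (b := b) h.1 h.2.1 h.2.2.1 h.2.2.2.1 h.2.2.2.2
    calc (nodes a b A B (j :: l)).1 ⊆ ⋃₀ {P | P ∈ (stepL a b (nodes a b A B l).1
          (nodes a b A B l).2 ((1/2) ^ (l.length + 1))).1} := getD_subset_sUnion j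
      _ = (nodes a b A B l).1 := hs.1.2.2
  · show (stepL a b _ _ _).1.getD j ∅ ⊆ _
    rw [stepL, dif_neg h]
    simp

lemma good_cond (hG : GoodN a b A B l) :
    IsClopen (nodes a b A B l).1 ∧ IsClopen (nodes a b A B l).2 ∧
    (nodes a b A B l).1.Nonempty ∧ (nodes a b A B l).2.Nonempty ∧
    (0:ℝ) < (1/2) ^ (l.length + 1) :=
  ⟨hG.2.2.1, hG.2.2.2, hG.1, hG.2.1, by positivity⟩

/-- All the facts about the children of a good node. -/
lemma node_step (hG : GoodN a b A B l) :
    IsPart (stepL a b (nodes a b A B l).1 (nodes a b A B l).2 ((1/2) ^ (l.length + 1))).1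
      (nodes a b A B l).1 ((1/2) ^ (l.length + 1)) ∧
    IsPart (stepL a b (nodes a b A B l).1 (nodes a b A B l).2 ((1/2) ^ (l.length + 1))).2
      (nodes a b A B l).2 ((1/2) ^ (l.length + 1)) ∧
    (stepL a b (nodes a b A B l).1 (nodes a b A B l).2 ((1/2) ^ (l.length + 1))).1.length =
      (stepL a b (nodes a b A B l).1 (nodes a b A B l).2 ((1/2) ^ (l.length + 1))).2.length ∧
    0 < (stepL a b (nodes a b A B l).1 (nodes a b A B l).2 ((1/2) ^ (l.length + 1))).1.length ∧
    (a ∈ (nodes a b A B l).1 → a ∈ (nodes a b A B (0 :: l)).1) ∧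
    (b ∈ (nodes a b A B l).2 → b ∈ (nodes a b A B (0 :: l)).2) := by
  have h := good_cond hG
  exact stepL_spec h.1 h.2.1 h.2.2.1 h.2.2.2.1 h.2.2.2.2

lemma child_subset_2 (l : List ℕ) (j : ℕ) :
    (nodes a b A B (j :: l)).2 ⊆ (nodes a b A B l).2 := by
  by_cases h : IsClopen (nodes a b A B l).1 ∧ IsClopen (nodes a b A B l).2 ∧
      (nodes a b A B l).1.Nonempty ∧ (nodes a b A B l).2.Nonempty ∧
      (0:ℝ) < (1/2) ^ (l.length + 1)
  · have hs := stepL_spec (a := a) (b := b) h.1 h.2.1 h.2.2.1 h.2.2.2.1 h.2.2.2.2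
    calc (nodes a b A B (j :: l)).2 ⊆ ⋃₀ {P | P ∈ (stepL a b (nodes a b A B l).1
          (nodes a b A B l).2 ((1/2) ^ (l.length + 1))).2} := getD_subset_sUnion j
      _ = (nodes a b A B l).2 := hs.2.1.2.2
  · show (stepL a b _ _ _).2.getD j ∅ ⊆ _
    rw [stepL, dif_neg h]
    simp

/-- A nonempty child of a good node is good. -/
lemma good_child (hG : GoodN a b A B l) {j : ℕ} (hj : (nodes a b A B (j :: l)).1.Nonempty) :
    GoodN a b A B (j :: l) := by
  obtain ⟨h1, h2, hlen, hpos, -, -⟩ := node_step hG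
  set p := stepL a b (nodes a b A B l).1 (nodes a b A B l).2 ((1/2) ^ (l.length + 1)) with hp
  have hjlt : j < p.1.length := by
    by_contra hge
    rw [show (nodes a b A B (j :: l)).1 = p.1.getD j ∅ from rfl,
      getD_eq_empty_of_ge (le_of_not_gt hge)] at hj
    exact Set.not_nonempty_empty hj
  have m1 := h1.1 _ (getD_mem_of_lt hjlt)
  have m2 := h2.1 _ (getD_mem_of_lt (by rw [← hlen]; exact hjlt))
  exact ⟨m1.2.1, m2.2.1, m1.1, m2.1⟩

/-- A child nonempty on the second side of a good node is good. -/
lemma good_child_2 (hG : GoodN a b A B l) {j : ℕ} (hj : (nodes a b A B (j :: l)).2.Nonempty) :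
    GoodN a b A B (j :: l) := by
  obtain ⟨h1, h2, hlen, hpos, -, -⟩ := node_step hG
  set p := stepL a b (nodes a b A B l).1 (nodes a b A B l).2 ((1/2) ^ (l.length + 1)) with hp
  have hjlt : j < p.2.length := by
    by_contra hge
    rw [show (nodes a b A B (j :: l)).2 = p.2.getD j ∅ from rfl,
      getD_eq_empty_of_ge (le_of_not_gt hge)] at hj
    exact Set.not_nonempty_empty hj
  have m1 := h1.1 _ (getD_mem_of_lt (by rw [hlen]; exact hjlt))
  have m2 := h2.1 _ (getD_mem_of_lt hjlt)
  exact ⟨m1.2.1, m2.2.1, m1.1, m2.1⟩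

/-- The children of a good node have controlled diameter. -/
lemma child_diam (hG : GoodN a b A B l) (j : ℕ) :
    Metric.diam (nodes a b A B (j :: l)).1 ≤ (1/2) ^ (l.length + 1) ∧
    Metric.diam (nodes a b A B (j :: l)).2 ≤ (1/2) ^ (l.length + 1) := by
  obtain ⟨h1, h2, hlen, hpos, -, -⟩ := node_step hG
  set p := stepL a b (nodes a b A B l).1 (nodes a b A B l).2 ((1/2) ^ (l.length + 1)) with hp
  constructor
  · by_cases hjlt : j < p.1.length
    · exact (h1.1 _ (getD_mem_of_lt hjlt)).2.2
    · rw [show (nodes a b A B (j :: l)).1 = p.1.getD j ∅ from rfl,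
        getD_eq_empty_of_ge (le_of_not_gt hjlt), Metric.diam_empty]
      positivity
  · by_cases hjlt : j < p.2.length
    · exact (h2.1 _ (getD_mem_of_lt hjlt)).2.2
    · rw [show (nodes a b A B (j :: l)).2 = p.2.getD j ∅ from rfl,
        getD_eq_empty_of_ge (le_of_not_gt hjlt), Metric.diam_empty]
      positivity

/-- Siblings are disjoint (unconditionally). -/
lemma sibling_disjoint (l : List ℕ) {i j : ℕ} (hij : i ≠ j) :
    Disjoint (nodes a b A B (i :: l)).1 (nodes a b A B (j :: l)).1 ∧
    Disjoint (nodes a b A B (i :: l)).2 (nodes a b A B (j :: l)).2 := by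
  by_cases h : IsClopen (nodes a b A B l).1 ∧ IsClopen (nodes a b A B l).2 ∧
      (nodes a b A B l).1.Nonempty ∧ (nodes a b A B l).2.Nonempty ∧
      (0:ℝ) < (1/2) ^ (l.length + 1)
  · have hs := stepL_spec (a := a) (b := b) h.1 h.2.1 h.2.2.1 h.2.2.2.1 h.2.2.2.2
    exact ⟨getD_disjoint hs.1.2.1 hij, getD_disjoint hs.2.1.2.1 hij⟩
  · constructor
    · show Disjoint ((stepL a b _ _ _).1.getD _ ∅) ((stepL a b _ _ _).1.getD _ ∅)
      rw [stepL, dif_neg h]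
      simp
    · show Disjoint ((stepL a b _ _ _).2.getD _ ∅) ((stepL a b _ _ _).2.getD _ ∅)
      rw [stepL, dif_neg h]
      simp

/-- A point of a good node lies in some child. -/
lemma child_cover_1 (hG : GoodN a b A B l) {x : Y} (hx : x ∈ (nodes a b A B l).1) :
    ∃ j, x ∈ (nodes a b A B (j :: l)).1 := by
  obtain ⟨h1, -, -, -, -, -⟩ := node_step hG
  exact sUnion_exists_getD (h1.2.2.symm ▸ hx)

lemma child_cover_2 (hG : GoodN a b A B l) {x : Y} (hx : x ∈ (nodes a b A B l).2) :
    ∃ j, x ∈ (nodes a b A B (j :: l)).2 := by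
  obtain ⟨-, h2, -, -, -, -⟩ := node_step hG
  exact sUnion_exists_getD (h2.2.2.symm ▸ hx)

/-- Two same-length nodes sharing a point on the first side coincide. -/
lemma node_unique_1 : ∀ (l l' : List ℕ), l.length = l'.length →
    ∀ {x : Y}, x ∈ (nodes a b A B l).1 → x ∈ (nodes a b A B l').1 → l = l'
  | [], [], _, _, _, _ => rfl
  | [], j' :: l', h, _, _, _ => by simp at h
  | j :: l, [], h, _, _, _ => by simp at h
  | j :: l, j' :: l', h, x, hx, hx' => by
    have ht : l = l' := node_unique_1 l l' (by simpa using h)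
      (child_subset_1 l j hx) (child_subset_1 l' j' hx')
    subst ht
    by_cases hjj : j = j'
    · rw [hjj]
    · exact ((Set.disjoint_left.1 (sibling_disjoint l hjj).1 hx) hx').elim

lemma node_unique_2 : ∀ (l l' : List ℕ), l.length = l'.length →
    ∀ {x : Y}, x ∈ (nodes a b A B l).2 → x ∈ (nodes a b A B l').2 → l = l'
  | [], [], _, _, _, _ => rfl
  | [], j' :: l', h, _, _, _ => by simp at h
  | j :: l, [], h, _, _, _ => by simp at h
  | j :: l, j' :: l', h, x, hx, hx' => by
    have ht : l = l' := node_unique_2 l l' (by simpa using h)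
      (child_subset_2 l j hx) (child_subset_2 l' j' hx')
    subst ht
    by_cases hjj : j = j'
    · rw [hjj]
    · exact ((Set.disjoint_left.1 (sibling_disjoint l hjj).2 hx) hx').elim

variable (a b A B) in
/-- The chain of nodes through a point on the first side. -/
noncomputable def chA (x : Y) : ℕ → List ℕ
  | 0 => []
  | n+1 => (if h : ∃ j, x ∈ (nodes a b A B (j :: chA x n)).1 then h.choose else 0)
      :: chA x n

variable (a b A B) in
/-- The chain of nodes through a point on the second side. -/
noncomputable def chB (y : Y) : ℕ → List ℕ
  | 0 => []
  | n+1 => (if h : ∃ j, y ∈ (nodes a b A B (j :: chB y n)).2 then h.choose else 0)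
      :: chB y n

lemma chA_spec (hG0 : GoodN a b A B []) {x : Y} (hx : x ∈ A) :
    ∀ n, GoodN a b A B (chA a b A B x n) ∧ x ∈ (nodes a b A B (chA a b A B x n)).1 ∧
      (chA a b A B x n).length = n := by
  intro n
  induction n with
  | zero => exact ⟨hG0, hx, rfl⟩
  | succ n ih =>
    obtain ⟨hG, hxn, hlen⟩ := ih
    have hex : ∃ j, x ∈ (nodes a b A B (j :: chA a b A B x n)).1 := child_cover_1 hG hxn
    rw [show chA a b A B x (n+1) =
      (if h : ∃ j, x ∈ (nodes a b A B (j :: chA a b A B x n)).1 then h.choose else 0)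
        :: chA a b A B x n from rfl, dif_pos hex]
    have hmem := hex.choose_spec
    exact ⟨good_child hG ⟨x, hmem⟩, hmem, by simp [hlen]⟩

lemma chB_spec (hG0 : GoodN a b A B []) {y : Y} (hy : y ∈ B) :
    ∀ n, GoodN a b A B (chB a b A B y n) ∧ y ∈ (nodes a b A B (chB a b A B y n)).2 ∧
      (chB a b A B y n).length = n := by
  intro n
  induction n with
  | zero => exact ⟨hG0, hy, rfl⟩
  | succ n ih =>
    obtain ⟨hG, hyn, hlen⟩ := ih
    have hex : ∃ j, y ∈ (nodes a b A B (j :: chB a b A B y n)).2 := child_cover_2 hG hyn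
    rw [show chB a b A B y (n+1) =
      (if h : ∃ j, y ∈ (nodes a b A B (j :: chB a b A B y n)).2 then h.choose else 0)
        :: chB a b A B y n from rfl, dif_pos hex]
    have hmem := hex.choose_spec
    exact ⟨good_child_2 hG ⟨y, hmem⟩, hmem, by simp [hlen]⟩

variable (a b A B) in
/-- The map from the first to the second side. -/
noncomputable def Fmap (x : Y) : Y := by
  classical
  exact if h : (⋂ n, (nodes a b A B (chA a b A B x n)).2).Nonempty then h.some else b

lemma Fmap_mem (hG0 : GoodN a b A B []) {x : Y} (hx : x ∈ A) (n : ℕ) :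
    Fmap a b A B x ∈ (nodes a b A B (chA a b A B x n)).2 := by
  classical
  have htsub : ∀ m, (nodes a b A B (chA a b A B x (m+1))).2 ⊆
      (nodes a b A B (chA a b A B x m)).2 := by
    intro m
    rw [show chA a b A B x (m+1) =
      (if h : ∃ j, x ∈ (nodes a b A B (j :: chA a b A B x m)).1 then h.choose else 0)
        :: chA a b A B x m from rfl]
    exact child_subset_2 _ _
  have hclosed : ∀ m, IsClosed (nodes a b A B (chA a b A B x m)).2 :=
    fun m => ((chA_spec hG0 hx m).1.2.2.2).1
  have htne : ∀ m, (nodes a b A B (chA a b A B x m)).2.Nonempty :=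
    fun m => (chA_spec hG0 hx m).1.2.1
  have hnon : (⋂ m, (nodes a b A B (chA a b A B x m)).2).Nonempty :=
    IsCompact.nonempty_iInter_of_sequence_nonempty_isCompact_isClosed _ htsub htne
      ((hclosed 0).isCompact) hclosed
  rw [Fmap, dif_pos hnon]
  exact Set.mem_iInter.1 hnon.some_mem n

lemma chain_diam_2 (hG0 : GoodN a b A B []) {x : Y} (hx : x ∈ A) (n : ℕ) :
    Metric.diam (nodes a b A B (chA a b A B x (n+1))).2 ≤ (1/2) ^ (n+1) := by
  obtain ⟨hG, -, hlen⟩ := chA_spec hG0 hx n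
  rw [show chA a b A B x (n+1) =
    (if h : ∃ j, x ∈ (nodes a b A B (j :: chA a b A B x n)).1 then h.choose else 0)
      :: chA a b A B x n from rfl]
  have := (child_diam hG (if h : ∃ j, x ∈ (nodes a b A B (j :: chA a b A B x n)).1
    then h.choose else 0)).2
  rwa [hlen] at this

lemma zeros_chain (hG0 : GoodN a b A B []) (ha : a ∈ A) (hb : b ∈ B) (n : ℕ) :
    GoodN a b A B (List.replicate n 0) ∧ a ∈ (nodes a b A B (List.replicate n 0)).1 ∧
      b ∈ (nodes a b A B (List.replicate n 0)).2 := by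
  induction n with
  | zero => exact ⟨hG0, ha, hb⟩
  | succ n ih =>
    obtain ⟨hG, han, hbn⟩ := ih
    obtain ⟨-, -, -, -, h5, h6⟩ := node_step hG
    rw [List.replicate_succ]
    exact ⟨good_child hG ⟨a, h5 han⟩, h5 han, h6 hbn⟩

/-- THE KEY LEMMA: pointed homeomorphism between nonempty clopen subsets. -/
lemma key_pointed {A B : Set Y} (hA : IsClopen A) (hB : IsClopen B)
    {a : Y} {b : Y} (ha : a ∈ A) (hb : b ∈ B) :
    ∃ g : ↥A ≃ₜ ↥B, (g ⟨a, ha⟩ : Y) = b := by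
  classical
  have hG0 : GoodN a b A B [] := ⟨⟨a, ha⟩, ⟨b, hb⟩, hA, hB⟩
  have hhalf : (0:ℝ) < 1/2 := by norm_num
  -- the underlying map
  have hmem : ∀ z : ↥A, Fmap a b A B z ∈ B := fun z => Fmap_mem hG0 z.2 0
  set g0 : ↥A → ↥B := fun z => ⟨Fmap a b A B z, hmem z⟩ with hg0
  -- small nodes
  have hdiam2 : ∀ (x : Y), x ∈ A → ∀ n, Metric.diam (nodes a b A B (chA a b A B x (n+1))).2
      ≤ (1/2)^(n+1) := fun x hx n => chain_diam_2 hG0 hx n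
  have hdiam1 : ∀ (x : Y), x ∈ A → ∀ n, Metric.diam (nodes a b A B (chA a b A B x (n+1))).1
      ≤ (1/2)^(n+1) := by
    intro x hx n
    obtain ⟨hG, -, hlen⟩ := chA_spec hG0 hx n
    rw [show chA a b A B x (n+1) =
      (if h : ∃ j, x ∈ (nodes a b A B (j :: chA a b A B x n)).1 then h.choose else 0)
        :: chA a b A B x n from rfl]
    have := (child_diam hG (if h : ∃ j, x ∈ (nodes a b A B (j :: chA a b A B x n)).1
      then h.choose else 0)).1
    rwa [hlen] at this
  -- injectivity
  have hinj : Function.Injective g0 := by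
    intro z w hzw
    have hFz : Fmap a b A B z = Fmap a b A B w := congrArg Subtype.val hzw
    ext
    by_contra hne
    have hd : 0 < dist (z : Y) (w : Y) := dist_pos.2 (fun h => hne (by exact_mod_cast h))
    obtain ⟨n, hn⟩ := exists_pow_lt_of_lt_one hd (by norm_num : (1:ℝ)/2 < 1)
    have e1 : Fmap a b A B z ∈ (nodes a b A B (chA a b A B (z : Y) (n+1))).2 :=
      Fmap_mem hG0 z.2 (n+1)
    have e2 : Fmap a b A B w ∈ (nodes a b A B (chA a b A B (w : Y) (n+1))).2 :=
      Fmap_mem hG0 w.2 (n+1)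
    rw [hFz] at e1
    have hchain : chA a b A B (z : Y) (n+1) = chA a b A B (w : Y) (n+1) :=
      node_unique_2 _ _
        (by rw [(chA_spec hG0 z.2 (n+1)).2.2, (chA_spec hG0 w.2 (n+1)).2.2]) e1 e2
    have hz1 := (chA_spec hG0 z.2 (n+1)).2.1
    have hw1 := (chA_spec hG0 w.2 (n+1)).2.1
    rw [hchain] at hz1
    have hle : dist (z : Y) (w : Y) ≤ (1/2)^(n+1) :=
      le_trans (Metric.dist_le_diam_of_mem isBounded_of_compactSpace hz1 hw1)
        (hdiam1 w w.2 n)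
    have h12 : ((1:ℝ)/2)^(n+1) ≤ (1/2)^n := by
      apply pow_le_pow_of_le_one (by norm_num) (by norm_num)
      omega
    linarith
  -- surjectivity
  have hsurj : Function.Surjective g0 := by
    intro ⟨y, hy⟩
    -- the chain of y on the B side; take the intersection of A-side nodes
    have htsub : ∀ m, (nodes a b A B (chB a b A B y (m+1))).1 ⊆
        (nodes a b A B (chB a b A B y m)).1 := by
      intro m
      rw [show chB a b A B y (m+1) =
        (if h : ∃ j, y ∈ (nodes a b A B (j :: chB a b A B y m)).2 then h.choose else 0)
          :: chB a b A B y m from rfl]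
      exact child_subset_1 _ _
    have hclosed : ∀ m, IsClosed (nodes a b A B (chB a b A B y m)).1 :=
      fun m => ((chB_spec hG0 hy m).1.2.2.1).1
    have htne : ∀ m, (nodes a b A B (chB a b A B y m)).1.Nonempty :=
      fun m => (chB_spec hG0 hy m).1.1
    obtain ⟨x, hx⟩ := IsCompact.nonempty_iInter_of_sequence_nonempty_isCompact_isClosed _
      htsub htne ((hclosed 0).isCompact) hclosed
    have hxmem : ∀ m, x ∈ (nodes a b A B (chB a b A B y m)).1 := Set.mem_iInter.1 hx
    have hxA : x ∈ A := hxmem 0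
    have hch : ∀ m, chA a b A B x m = chB a b A B y m := by
      intro m
      exact node_unique_1 _ _ (by rw [(chA_spec hG0 hxA m).2.2, (chB_spec hG0 hy m).2.2])
        (chA_spec hG0 hxA m).2.1 (hxmem m)
    refine ⟨⟨x, hxA⟩, ?_⟩
    have hdist : ∀ m : ℕ, dist (Fmap a b A B x) y ≤ (1/2)^(m+1) := by
      intro m
      have e1 : Fmap a b A B x ∈ (nodes a b A B (chA a b A B x (m+1))).2 :=
        Fmap_mem hG0 hxA (m+1)
      have e2 : y ∈ (nodes a b A B (chA a b A B x (m+1))).2 := by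
        rw [hch (m+1)]; exact (chB_spec hG0 hy (m+1)).2.1
      exact le_trans (Metric.dist_le_diam_of_mem isBounded_of_compactSpace e1 e2)
        (hdiam2 x hxA m)
    have : dist (Fmap a b A B x) y ≤ 0 := by
      by_contra hpos
      push_neg at hpos
      obtain ⟨n, hn⟩ := exists_pow_lt_of_lt_one hpos (by norm_num : (1:ℝ)/2 < 1)
      have h1 := hdist n
      have : ((1:ℝ)/2)^(n+1) ≤ (1/2)^n := by
        apply pow_le_pow_of_le_one (by norm_num) (by norm_num)
        omega
      linarith
    have : Fmap a b A B x = y := by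
      have := dist_le_zero.1 this; exact this
    exact Subtype.ext this
  -- g0 a = b
  have hga : (g0 ⟨a, ha⟩ : Y) = b := by
    have hch : ∀ n, chA a b A B a n = List.replicate n 0 := by
      intro n
      exact node_unique_1 _ _ (by rw [(chA_spec hG0 ha n).2.2, List.length_replicate])
        (chA_spec hG0 ha n).2.1 (zeros_chain hG0 ha hb n).2.1
    have hdist : ∀ m : ℕ, dist (Fmap a b A B a) b ≤ (1/2)^(m+1) := by
      intro m
      have e1 : Fmap a b A B a ∈ (nodes a b A B (chA a b A B a (m+1))).2 :=
        Fmap_mem hG0 ha (m+1)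
      have e2 : b ∈ (nodes a b A B (chA a b A B a (m+1))).2 := by
        rw [hch (m+1)]; exact (zeros_chain hG0 ha hb (m+1)).2.2
      exact le_trans (Metric.dist_le_diam_of_mem isBounded_of_compactSpace e1 e2)
        (hdiam2 a ha m)
    have : dist (Fmap a b A B a) b ≤ 0 := by
      by_contra hpos
      push_neg at hpos
      obtain ⟨n, hn⟩ := exists_pow_lt_of_lt_one hpos (by norm_num : (1:ℝ)/2 < 1)
      have h1 := hdist n
      have : ((1:ℝ)/2)^(n+1) ≤ (1/2)^n := by
        apply pow_le_pow_of_le_one (by norm_num) (by norm_num)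
        omega
      linarith
    exact dist_le_zero.1 this
  -- continuity
  have hcont : Continuous g0 := by
    rw [Metric.continuous_iff]
    intro z ε hε
    obtain ⟨n, hn⟩ := exists_pow_lt_of_lt_one hε (by norm_num : (1:ℝ)/2 < 1)
    have hGn := (chA_spec hG0 z.2 (n+1)).1
    have hopen : IsOpen (nodes a b A B (chA a b A B (z : Y) (n+1))).1 := hGn.2.2.1.2
    obtain ⟨δ, hδ, hball⟩ := Metric.isOpen_iff.1 hopen (z : Y) (chA_spec hG0 z.2 (n+1)).2.1
    refine ⟨δ, hδ, fun w hw => ?_⟩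
    have hwmem : (w : Y) ∈ (nodes a b A B (chA a b A B (z : Y) (n+1))).1 := by
      apply hball
      rwa [Metric.mem_ball, ← Subtype.dist_eq]
    have hch : chA a b A B (w : Y) (n+1) = chA a b A B (z : Y) (n+1) :=
      node_unique_1 _ _ (by rw [(chA_spec hG0 w.2 (n+1)).2.2, (chA_spec hG0 z.2 (n+1)).2.2])
        (chA_spec hG0 w.2 (n+1)).2.1 hwmem
    have e1 : Fmap a b A B w ∈ (nodes a b A B (chA a b A B (z : Y) (n+1))).2 := by
      rw [← hch]; exact Fmap_mem hG0 w.2 (n+1)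
    have e2 : Fmap a b A B z ∈ (nodes a b A B (chA a b A B (z : Y) (n+1))).2 :=
      Fmap_mem hG0 z.2 (n+1)
    have hd : dist (g0 w) (g0 z) ≤ (1/2)^(n+1) := by
      rw [Subtype.dist_eq]
      exact le_trans (Metric.dist_le_diam_of_mem isBounded_of_compactSpace e1 e2)
        (hdiam2 (z : Y) z.2 n)
    have : ((1:ℝ)/2)^(n+1) ≤ (1/2)^n := by
      apply pow_le_pow_of_le_one (by norm_num) (by norm_num)
      omega
    linarith
  -- assemble the homeomorphism
  haveI : CompactSpace ↥A := isCompact_iff_compactSpace.1 hA.1.isCompact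
  let e : ↥A ≃ ↥B := Equiv.ofBijective g0 ⟨hinj, hsurj⟩
  have he : Continuous e := hcont
  exact ⟨he.homeoOfEquivCompactToT2, hga⟩

/-- The swap homeomorphism exchanging two disjoint clopen sets, fixing everything else. -/
lemma swap_homeo {S T : Set Y} (hS : IsClopen S) (hT : IsClopen T) (hST : Disjoint S T)
    {s t : Y} (hs : s ∈ S) (ht : t ∈ T) :
    ∃ σ : Y ≃ₜ Y, σ s = t ∧ (∀ u ∈ S, σ u ∈ T) ∧ (∀ u ∈ T, σ u ∈ S) ∧
      (∀ u, u ∉ S ∪ T → σ u = u) ∧ (∀ u, σ.symm u = σ u) := by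
  classical
  obtain ⟨g, hg⟩ := key_pointed hS hT hs ht
  set f : Y → Y := fun u => if h : u ∈ S then (g ⟨u, h⟩ : Y)
    else if h : u ∈ T then (g.symm ⟨u, h⟩ : Y) else u with hf
  have hfS : ∀ u (h : u ∈ S), f u = (g ⟨u, h⟩ : Y) := fun u h => dif_pos h
  have hfT : ∀ u (h : u ∈ T), f u = (g.symm ⟨u, h⟩ : Y) := by
    intro u h
    rw [hf]
    simp only
    rw [dif_neg (fun hS' => Set.disjoint_left.1 hST hS' h), dif_pos h]
  have hfO : ∀ u, u ∉ S ∪ T → f u = u := by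
    intro u h
    rw [hf]
    simp only
    rw [dif_neg (fun h' => h (Or.inl h')), dif_neg (fun h' => h (Or.inr h'))]
  have hST' : ∀ u (h : u ∈ S), f u ∈ T := fun u h => by rw [hfS u h]; exact (g ⟨u, h⟩).2
  have hTS' : ∀ u (h : u ∈ T), f u ∈ S := fun u h => by rw [hfT u h]; exact (g.symm ⟨u, h⟩).2
  have hinv : Function.Involutive f := by
    intro u
    by_cases h : u ∈ S
    · have h1 : f u ∈ T := hST' u h
      rw [hfT (f u) h1]
      have : (⟨f u, h1⟩ : ↥T) = g ⟨u, h⟩ := Subtype.ext (hfS u h)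
      rw [this, Homeomorph.symm_apply_apply]
    · by_cases h' : u ∈ T
      · have h1 : f u ∈ S := hTS' u h'
        rw [hfS (f u) h1]
        have : (⟨f u, h1⟩ : ↥S) = g.symm ⟨u, h'⟩ := Subtype.ext (hfT u h')
        rw [this, Homeomorph.apply_symm_apply]
      · have h0 : u ∉ S ∪ T := fun hm => hm.elim h h'
        rw [hfO _ h0, hfO _ h0]
  have hcont : Continuous f := by
    rw [continuous_iff_continuousAt]
    intro u
    by_cases h : u ∈ S
    · refine ContinuousOn.continuousAt ?_ (hS.2.mem_nhds h)
      rw [continuousOn_iff_continuous_restrict]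
      have : S.domRestrict f = fun z : ↥S => (g z : Y) := by
        funext z
        simp only [Set.domRestrict_apply]
        rw [hfS z z.2]
      rw [this]
      exact continuous_subtype_val.comp g.continuous
    · by_cases h' : u ∈ T
      · refine ContinuousOn.continuousAt ?_ (hT.2.mem_nhds h')
        rw [continuousOn_iff_continuous_restrict]
        have : T.domRestrict f = fun z : ↥T => (g.symm z : Y) := by
          funext z
          simp only [Set.domRestrict_apply]
          rw [hfT z z.2]
        rw [this]
        exact continuous_subtype_val.comp g.symm.continuous
      · have hopen : IsOpen (S ∪ T)ᶜ := (hS.1.union hT.1).isOpen_compl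
        refine ContinuousOn.continuousAt ?_ (hopen.mem_nhds (fun hm => hm.elim h h'))
        rw [continuousOn_iff_continuous_restrict]
        have : Set.domRestrict (S ∪ T)ᶜ f = Subtype.val := by
          funext z
          simp only [Set.domRestrict_apply]
          exact hfO z z.2
        rw [this]
        exact continuous_subtype_val
  refine ⟨⟨hinv.toPerm f, hcont, hcont⟩, ?_, fun u h => hST' u h, fun u h => hTS' u h,
    fun u h => hfO u h, fun u => rfl⟩
  rw [show ((⟨hinv.toPerm f, hcont, hcont⟩ : Y ≃ₜ Y) s) = f s from rfl, hfS s hs, hg]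

/-- Composition of a list of homeomorphisms, first element applied first. -/
noncomputable def compL : List (Y ≃ₜ Y) → (Y ≃ₜ Y) :=
  fun L => L.foldr (fun e acc => e.trans acc) (Homeomorph.refl Y)

lemma compL_cons (e : Y ≃ₜ Y) (L : List (Y ≃ₜ Y)) (u : Y) :
    compL (e :: L) u = compL L (e u) := rfl

lemma compL_symm_cons (e : Y ≃ₜ Y) (L : List (Y ≃ₜ Y)) (u : Y) :
    (compL (e :: L)).symm u = e.symm ((compL L).symm u) := rfl

lemma compL_fix : ∀ (L : List (Y ≃ₜ Y)) (u : Y), (∀ e ∈ L, e u = u) → compL L u = u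
  | [], u, _ => rfl
  | e :: L, u, h => by
    rw [compL_cons, h e (List.mem_cons_self)]
    exact compL_fix L u (fun e' he' => h e' (List.mem_cons_of_mem _ he'))

lemma compL_preserve {D : Set Y} : ∀ (L : List (Y ≃ₜ Y)), (∀ e ∈ L, ∀ u ∈ D, e u ∈ D) →
    ∀ u ∈ D, compL L u ∈ D
  | [], _, u, hu => hu
  | e :: L, h, u, hu => by
    rw [compL_cons]
    exact compL_preserve L (fun e' he' => h e' (List.mem_cons_of_mem _ he')) _
      (h e (List.mem_cons_self) u hu)

lemma compL_symm_preserve {D : Set Y} : ∀ (L : List (Y ≃ₜ Y)),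
    (∀ e ∈ L, ∀ u ∈ D, e.symm u ∈ D) → ∀ u ∈ D, (compL L).symm u ∈ D
  | [], _, u, hu => hu
  | e :: L, h, u, hu => by
    rw [compL_symm_cons]
    exact h e (List.mem_cons_self) _
      (compL_symm_preserve L (fun e' he' => h e' (List.mem_cons_of_mem _ he')) u hu)

/-- Evaluation of a composition of homeomorphisms with pairwise disjoint supports. -/
lemma compL_eval : ∀ (n : ℕ) (σ : Fin n → Y ≃ₜ Y) (Supp : Fin n → Set Y),
    (∀ i, ∀ u, u ∉ Supp i → σ i u = u) →
    (∀ i, ∀ u ∈ Supp i, σ i u ∈ Supp i) →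
    (∀ i j, i ≠ j → Disjoint (Supp i) (Supp j)) →
    ∀ (i : Fin n) (u : Y), u ∈ Supp i → compL (List.ofFn σ) u = σ i u
  | 0, σ, Supp, _, _, _, i, _, _ => i.elim0
  | n+1, σ, Supp, hid, hmap, hdisj, i, u, hu => by
    rw [List.ofFn_succ, compL_cons]
    rcases Fin.eq_zero_or_eq_succ i with rfl | ⟨i', rfl⟩
    · have h1 : σ 0 u ∈ Supp 0 := hmap 0 u hu
      rw [compL_fix]
      intro e he
      rw [List.mem_ofFn] at he
      obtain ⟨k, rfl⟩ := he
      exact hid _ _ (fun hk => Set.disjoint_left.1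
        (hdisj 0 (Fin.succ k) (by simp [Fin.ext_iff])) h1 hk)
    · have h0 : σ 0 u = u := hid 0 u (fun hk => Set.disjoint_left.1
        (hdisj (Fin.succ i') 0 (by simp [Fin.ext_iff])) hu hk)
      rw [h0]
      exact compL_eval n (σ ∘ Fin.succ) (Supp ∘ Fin.succ)
        (fun k => hid k.succ) (fun k => hmap k.succ)
        (fun k l hkl => hdisj k.succ l.succ (by simpa [Fin.ext_iff] using hkl))
        i' u hu

end Tree

section Main
open scoped Classical

variable {Y : Type*} [MetricSpace Y] [CompactSpace Y] [PerfectSpace Y]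
  [TotallyDisconnectedSpace Y]

/-- Pairwise disjoint clopen neighborhoods of finitely many distinct points. -/
lemma disjoint_clopen_nbhds {ι : Type*} [Fintype ι] {z : ι → Y} (hz : Function.Injective z)
    {W : ι → Set Y} (hW : ∀ i, IsOpen (W i)) (hzW : ∀ i, z i ∈ W i) :
    ∃ U : ι → Set Y, (∀ i, IsClopen (U i) ∧ z i ∈ U i ∧ U i ⊆ W i) ∧
      ∀ i j, i ≠ j → Disjoint (U i) (U j) := by
  set m : ℝ := if h : (Finset.univ.offDiag (α := ι)).Nonempty then
    Finset.univ.offDiag.inf' h (fun p => dist (z p.1) (z p.2)) else 1 with hm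
  have hm0 : 0 < m := by
    rw [hm]
    split
    · rename_i h
      rw [Finset.lt_inf'_iff]
      rintro ⟨i, j⟩ hij
      rw [Finset.mem_offDiag] at hij
      exact dist_pos.2 (fun he => hij.2.2 (hz he))
    · norm_num
  have hml : ∀ i j, i ≠ j → m ≤ dist (z i) (z j) := by
    intro i j hij
    have hmem : (i, j) ∈ Finset.univ.offDiag := Finset.mem_offDiag.2 ⟨Finset.mem_univ _,
      Finset.mem_univ _, hij⟩
    rw [hm, dif_pos ⟨_, hmem⟩]
    exact Finset.inf'_le _ hmem
  have : ∀ i, ∃ V : Set Y, IsClopen V ∧ z i ∈ V ∧ V ⊆ W i ∩ ball (z i) (m/2) := fun i =>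
    compact_exists_isClopen_in_isOpen ((hW i).inter isOpen_ball)
      ⟨hzW i, mem_ball_self (by linarith)⟩
  choose U hU1 hU2 hU3 using this
  refine ⟨U, fun i => ⟨hU1 i, hU2 i, (hU3 i).trans inter_subset_left⟩, fun i j hij => ?_⟩
  rw [Set.disjoint_left]
  intro u hui huj
  have h1 : dist u (z i) < m/2 := ((hU3 i) hui).2
  have h2 : dist u (z j) < m/2 := ((hU3 j) huj).2
  have := hml i j hij
  have : dist (z i) (z j) ≤ dist u (z i) + dist u (z j) := dist_triangle_left _ _ _
  linarith [hml i j hij]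

end Main


end CantorStarAux

open Metric Set in
/-- Every Cantor space (compact, perfect, totally disconnected,
nonempty metric space) has the property*. -/
theorem cantor_space_has_property_star
    (X : Type*) [MetricSpace X] [CompactSpace X] [PerfectSpace X]
    [TotallyDisconnectedSpace X] [Nonempty X] :
    PropertyStar X := by
  classical
  intro ε hε
  -- partition of X into clopen pieces of diameter at most ε/2
  obtain ⟨LP, hLP⟩ := aux_part_exists (S := (Set.univ : Set X)) isClopen_univ Set.univ_nonempty (half_pos hε)
  have hpiece : ∀ P ∈ LP, IsClopen P ∧ P.Nonempty ∧ Metric.diam P ≤ ε/2 := hLP.1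
  have heqd : ∀ Q ∈ LP, ∀ R ∈ LP, Q = R ∨ Disjoint Q R := by
    intro Q hQ R hR
    by_cases h : Q = R
    · exact Or.inl h
    · exact Or.inr (hLP.2.1.forall hQ hR h)
  have hmem_univ : ∀ u : X, ∃ D ∈ LP, u ∈ D := by
    intro u
    have : u ∈ ⋃₀ {P | P ∈ LP} := hLP.2.2.symm ▸ Set.mem_univ u
    obtain ⟨D, hD, hu⟩ := this
    exact ⟨D, hD, hu⟩
  -- Lebesgue number
  have hcover : (Set.univ : Set X) ⊆ ⋃ P : {P // P ∈ LP}, (P : Set X) := by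
    intro u _
    obtain ⟨D, hD, hu⟩ := hmem_univ u
    exact Set.mem_iUnion.2 ⟨⟨D, hD⟩, hu⟩
  obtain ⟨δ, hδ, hleb⟩ := lebesgue_number_lemma_of_metric isCompact_univ
    (fun P : {P // P ∈ LP} => (hpiece P P.2).1.2) hcover
  refine ⟨δ, hδ, ?_⟩
  intro n x y _hn hxinj hyinj hxy
  -- the common pieces
  have hPex : ∀ i : Fin n, ∃ P, P ∈ LP ∧ x i ∈ P ∧ y i ∈ P := by
    intro i
    obtain ⟨⟨P, hPmem⟩, hball⟩ := hleb (x i) (Set.mem_univ _)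
    exact ⟨P, hPmem, hball (mem_ball_self hδ), hball (by rw [mem_ball, dist_comm]; exact hxy i)⟩
  choose P hPmem hPx hPy using hPex
  have hPcl : ∀ i, IsClopen (P i) := fun i => (hpiece _ (hPmem i)).1
  -- disjoint clopen neighborhoods of the `x i` inside the pieces
  obtain ⟨U1, hU1, hU1d⟩ := disjoint_clopen_nbhds hxinj (fun i => (hPcl i).2) hPx
  -- fresh points
  have hcex : ∀ i, ∃ cp, cp ∈ U1 i ∧ cp ∉ Set.range x ∪ Set.range y := by
    intro i
    have hinf := aux_open_infinite' (hU1 i).1.2 ⟨x i, (hU1 i).2.1⟩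
    obtain ⟨cp, hcp⟩ := (hinf.diff ((Set.finite_range x).union (Set.finite_range y))).nonempty
    exact ⟨cp, hcp.1, hcp.2⟩
  choose c hc1 hc2 using hcex
  have hcP : ∀ i, c i ∈ P i := fun i => (hU1 i).2.2 (hc1 i)
  have hcinj : Function.Injective c := by
    intro i j h
    by_contra hij
    exact Set.disjoint_left.1 (hU1d i j hij) (hc1 i) (h ▸ hc1 j)
  have hcx : ∀ i j, c i ≠ x j := fun i j h => (hc2 i) (Or.inl ⟨j, h.symm⟩)
  have hcy : ∀ i j, c i ≠ y j := fun i j h => (hc2 i) (Or.inr ⟨j, h.symm⟩)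
  -- stage 1 : swaps x i ↦ c i
  have hz1 : Function.Injective (Sum.elim x c) := by
    rintro (i | i) (j | j) h
    · rw [hxinj h]
    · exact absurd (h.symm : c j = x i) (hcx j i)
    · exact absurd (h : c i = x j) (hcx i j)
    · rw [hcinj h]
  obtain ⟨V1, hV1, hV1d⟩ := disjoint_clopen_nbhds hz1
    (W := Sum.elim (fun i => P i) (fun i => P i))
    (fun s => by rcases s with i | i <;> exact (hPcl i).2)
    (fun s => by rcases s with i | i; exacts [hPx i, hcP i])
  have hσex : ∀ i : Fin n, ∃ σ : X ≃ₜ X, σ (x i) = c i ∧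
      (∀ u ∈ V1 (Sum.inl i), σ u ∈ V1 (Sum.inr i)) ∧
      (∀ u ∈ V1 (Sum.inr i), σ u ∈ V1 (Sum.inl i)) ∧
      (∀ u, u ∉ V1 (Sum.inl i) ∪ V1 (Sum.inr i) → σ u = u) ∧
      (∀ u, σ.symm u = σ u) := by
    intro i
    exact swap_homeo (hV1 (Sum.inl i)).1 (hV1 (Sum.inr i)).1
      (hV1d _ _ (by simp)) (hV1 (Sum.inl i)).2.1 (hV1 (Sum.inr i)).2.1
  choose σ hσ1 hσ2 hσ3 hσ4 hσ5 using hσex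
  -- stage 2 : swaps c i ↦ y i
  have hz2 : Function.Injective (Sum.elim c y) := by
    rintro (i | i) (j | j) h
    · rw [hcinj h]
    · exact absurd (h : c i = y j) (hcy i j)
    · exact absurd (h.symm : c j = y i) (hcy j i)
    · rw [hyinj h]
  obtain ⟨V2, hV2, hV2d⟩ := disjoint_clopen_nbhds hz2
    (W := Sum.elim (fun i => P i) (fun i => P i))
    (fun s => by rcases s with i | i <;> exact (hPcl i).2)
    (fun s => by rcases s with i | i; exacts [hcP i, hPy i])
  have hτex : ∀ i : Fin n, ∃ τ : X ≃ₜ X, τ (c i) = y i ∧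
      (∀ u ∈ V2 (Sum.inl i), τ u ∈ V2 (Sum.inr i)) ∧
      (∀ u ∈ V2 (Sum.inr i), τ u ∈ V2 (Sum.inl i)) ∧
      (∀ u, u ∉ V2 (Sum.inl i) ∪ V2 (Sum.inr i) → τ u = u) ∧
      (∀ u, τ.symm u = τ u) := by
    intro i
    exact swap_homeo (hV2 (Sum.inl i)).1 (hV2 (Sum.inr i)).1
      (hV2d _ _ (by simp)) (hV2 (Sum.inl i)).2.1 (hV2 (Sum.inr i)).2.1
  choose τ hτ1 hτ2 hτ3 hτ4 hτ5 using hτex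
  -- the compositions
  set Φ1 := compL (List.ofFn σ) with hΦ1
  set Φ2 := compL (List.ofFn τ) with hΦ2
  set φ := Φ1.trans Φ2 with hφ
  -- supports
  have hsupp1 : ∀ i j, i ≠ j →
      Disjoint (V1 (Sum.inl i) ∪ V1 (Sum.inr i)) (V1 (Sum.inl j) ∪ V1 (Sum.inr j)) := by
    intro i j hij
    rw [Set.disjoint_union_left]
    constructor <;> rw [Set.disjoint_union_right] <;>
      exact ⟨hV1d _ _ (by simp [hij]), hV1d _ _ (by simp [hij])⟩
  have hsupp2 : ∀ i j, i ≠ j →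
      Disjoint (V2 (Sum.inl i) ∪ V2 (Sum.inr i)) (V2 (Sum.inl j) ∪ V2 (Sum.inr j)) := by
    intro i j hij
    rw [Set.disjoint_union_left]
    constructor <;> rw [Set.disjoint_union_right] <;>
      exact ⟨hV2d _ _ (by simp [hij]), hV2d _ _ (by simp [hij])⟩
  have hmap1 : ∀ i, ∀ u ∈ V1 (Sum.inl i) ∪ V1 (Sum.inr i),
      σ i u ∈ V1 (Sum.inl i) ∪ V1 (Sum.inr i) := by
    rintro i u (hu | hu)
    · exact Or.inr (hσ2 i u hu)
    · exact Or.inl (hσ3 i u hu)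
  have hmap2 : ∀ i, ∀ u ∈ V2 (Sum.inl i) ∪ V2 (Sum.inr i),
      τ i u ∈ V2 (Sum.inl i) ∪ V2 (Sum.inr i) := by
    rintro i u (hu | hu)
    · exact Or.inr (hτ2 i u hu)
    · exact Or.inl (hτ3 i u hu)
  -- evaluation
  have hΦ1x : ∀ i, Φ1 (x i) = c i := by
    intro i
    rw [hΦ1, compL_eval n σ (fun i => V1 (Sum.inl i) ∪ V1 (Sum.inr i)) hσ4 hmap1 hsupp1 i
      (x i) (Or.inl (hV1 (Sum.inl i)).2.1)]
    exact hσ1 i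
  have hΦ2c : ∀ i, Φ2 (c i) = y i := by
    intro i
    rw [hΦ2, compL_eval n τ (fun i => V2 (Sum.inl i) ∪ V2 (Sum.inr i)) hτ4 hmap2 hsupp2 i
      (c i) (Or.inl (hV2 (Sum.inl i)).2.1)]
    exact hτ1 i
  -- piece preservation
  have hσpres : ∀ k, ∀ D ∈ LP, ∀ u ∈ D, σ k u ∈ D := by
    intro k D hD u hu
    by_cases h1 : u ∈ V1 (Sum.inl k)
    · have h2 : σ k u ∈ V1 (Sum.inr k) := hσ2 k u h1
      rcases heqd D hD (P k) (hPmem k) with rfl | hdisj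
      · exact (hV1 (Sum.inr k)).2.2 h2
      · exact absurd ((hV1 (Sum.inl k)).2.2 h1) (Set.disjoint_left.1 hdisj hu)
    · by_cases h2 : u ∈ V1 (Sum.inr k)
      · have h3 : σ k u ∈ V1 (Sum.inl k) := hσ3 k u h2
        rcases heqd D hD (P k) (hPmem k) with rfl | hdisj
        · exact (hV1 (Sum.inl k)).2.2 h3
        · exact absurd ((hV1 (Sum.inr k)).2.2 h2) (Set.disjoint_left.1 hdisj hu)
      · rw [hσ4 k u (fun hm => hm.elim h1 h2)]
        exact hu
  have hτpres : ∀ k, ∀ D ∈ LP, ∀ u ∈ D, τ k u ∈ D := by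
    intro k D hD u hu
    by_cases h1 : u ∈ V2 (Sum.inl k)
    · have h2 : τ k u ∈ V2 (Sum.inr k) := hτ2 k u h1
      rcases heqd D hD (P k) (hPmem k) with rfl | hdisj
      · exact (hV2 (Sum.inr k)).2.2 h2
      · exact absurd ((hV2 (Sum.inl k)).2.2 h1) (Set.disjoint_left.1 hdisj hu)
    · by_cases h2 : u ∈ V2 (Sum.inr k)
      · have h3 : τ k u ∈ V2 (Sum.inl k) := hτ3 k u h2
        rcases heqd D hD (P k) (hPmem k) with rfl | hdisj
        · exact (hV2 (Sum.inl k)).2.2 h3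
        · exact absurd ((hV2 (Sum.inr k)).2.2 h2) (Set.disjoint_left.1 hdisj hu)
      · rw [hτ4 k u (fun hm => hm.elim h1 h2)]
        exact hu
  have hpres : ∀ D ∈ LP, ∀ u ∈ D, φ u ∈ D ∧ φ.symm u ∈ D := by
    intro D hD u hu
    have hof1 : ∀ e ∈ List.ofFn σ, ∀ u ∈ D, e u ∈ D := by
      intro e he
      rw [List.mem_ofFn] at he
      obtain ⟨k, rfl⟩ := he
      exact hσpres k D hD
    have hof2 : ∀ e ∈ List.ofFn τ, ∀ u ∈ D, e u ∈ D := by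
      intro e he
      rw [List.mem_ofFn] at he
      obtain ⟨k, rfl⟩ := he
      exact hτpres k D hD
    have hof1s : ∀ e ∈ List.ofFn σ, ∀ u ∈ D, e.symm u ∈ D := by
      intro e he u hu
      rw [List.mem_ofFn] at he
      obtain ⟨k, rfl⟩ := he
      rw [hσ5 k u]
      exact hσpres k D hD u hu
    have hof2s : ∀ e ∈ List.ofFn τ, ∀ u ∈ D, e.symm u ∈ D := by
      intro e he u hu
      rw [List.mem_ofFn] at he
      obtain ⟨k, rfl⟩ := he
      rw [hτ5 k u]
      exact hτpres k D hD u hu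
    constructor
    · show Φ2 (Φ1 u) ∈ D
      exact compL_preserve _ hof2 _ (compL_preserve _ hof1 _ hu)
    · show Φ1.symm (Φ2.symm u) ∈ D
      exact compL_symm_preserve _ hof1s _ (compL_symm_preserve _ hof2s _ hu)
  -- conclusion
  refine ⟨φ, ?_, ?_⟩
  · have hb1 : ∀ u : X, dist (φ u) u ≤ ε/2 := by
      intro u
      obtain ⟨D, hD, hu⟩ := hmem_univ u
      exact le_trans (Metric.dist_le_diam_of_mem isBounded_of_compactSpace
        ((hpres D hD u hu).1) hu) (hpiece D hD).2.2
    have hb2 : ∀ u : X, dist (φ.symm u) u ≤ ε/2 := by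
      intro u
      obtain ⟨D, hD, hu⟩ := hmem_univ u
      exact le_trans (Metric.dist_le_diam_of_mem isBounded_of_compactSpace
        ((hpres D hD u hu).2) hu) (hpiece D hD).2.2
    have h1 : dC0 (φ : X → X) ((Homeomorph.refl X : X ≃ₜ X) : X → X) ≤ ε/2 :=
      ciSup_le (fun u => hb1 u)
    have h2 : dC0 (φ.symm : X → X) (((Homeomorph.refl X).symm : X ≃ₜ X) : X → X) ≤ ε/2 :=
      ciSup_le (fun u => hb2 u)
    exact max_lt (lt_of_le_of_lt h1 (by linarith)) (lt_of_le_of_lt h2 (by linarith))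
  · intro i
    show Φ2 (Φ1 (x i)) = y i
    rw [hΦ1x i, hΦ2c i]
end

section
/- Let (X,d) be a compact metric space which is perfect and has the property*, and let f be a homeomorphism of X. If f is topologically stable, then f has the shadowing property and the strict periodic shadowing property; in particular the set of chain recurrent points of f equals the closure of the set of periodic points of f. -/
/-! Common definitions: distances on maps/homeomorphisms of a metric space,
topological stability and shadowing-type properties. -/

variable {X : Type*} [MetricSpace X]

section H2
variable {X : Type*} [MetricSpace X]

variable {X : Type*} [MetricSpace X]

lemma perf_nebot [PerfectSpace X] (x : X) : Filter.NeBot (nhdsWithin x {x}ᶜ) := by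
  have h := PerfectSpace.univ_preperfect (α := X) x (Set.mem_univ x)
  unfold AccPt at h
  simpa using h

lemma exists_dist_bound [CompactSpace X] : ∃ C : ℝ, ∀ a b : X, dist a b ≤ C := by
  obtain ⟨C, hC⟩ := Metric.isBounded_iff.1 (Metric.isBounded_of_compactSpace (s := (Set.univ : Set X)))
  exact ⟨C, fun a b => hC (Set.mem_univ a) (Set.mem_univ b)⟩

lemma bddAbove_dist [CompactSpace X] (u v : X → X) :
    BddAbove (Set.range fun x => dist (u x) (v x)) := by
  obtain ⟨C, hC⟩ := exists_dist_bound (X := X)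
  exact ⟨C, by rintro _ ⟨x, rfl⟩; exact hC _ _⟩

lemma dist_le_dC0 [CompactSpace X] (u v : X → X) (x : X) : dist (u x) (v x) ≤ dC0 u v :=
  le_ciSup (bddAbove_dist u v) x

lemma dC0_le {u v : X → X} {c : ℝ} (hc : 0 ≤ c) (h : ∀ x, dist (u x) (v x) ≤ c) :
    dC0 u v ≤ c :=
  Real.iSup_le h hc

lemma dC0_nonneg (u v : X → X) : 0 ≤ dC0 u v :=
  Real.iSup_nonneg fun x => dist_nonneg

/-- perturb a finite sequence to be injective -/
lemma exists_inj_perturb [PerfectSpace X] (z : ℕ → X) {τ : ℝ} (hτ : 0 < τ) (k : ℕ) :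
    ∃ z' : ℕ → X, (∀ i j, i < k → j < k → z' i = z' j → i = j) ∧
      ∀ i < k, dist (z' i) (z i) < τ := by
  induction k with
  | zero => exact ⟨z, fun i j hi => absurd hi (Nat.not_lt_zero _), fun i hi => absurd hi (Nat.not_lt_zero _)⟩
  | succ k ih =>
    obtain ⟨z', hinj, hdist⟩ := ih
    have hball : Metric.ball (z k) τ ∈ nhds (z k) := Metric.ball_mem_nhds _ hτ
    have hinf : (Metric.ball (z k) τ).Infinite := by
      have := perf_nebot (z k)
      exact infinite_of_mem_nhds (z k) hball
    have hfin : (z' '' Set.Iio k).Finite := (Set.finite_Iio k).image z'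
    obtain ⟨w, hw, hwS⟩ : ∃ w, w ∈ Metric.ball (z k) τ ∧ w ∉ z' '' Set.Iio k := by
      obtain ⟨w, hw⟩ := (hinf.diff hfin).nonempty
      exact ⟨w, hw.1, hw.2⟩
    refine ⟨Function.update z' k w, ?_, ?_⟩
    · intro i j hi hj hij
      rcases Nat.lt_succ_iff_lt_or_eq.1 hi with hi' | rfl
      · rcases Nat.lt_succ_iff_lt_or_eq.1 hj with hj' | rfl
        · rw [Function.update_of_ne (Nat.ne_of_lt hi'), Function.update_of_ne (Nat.ne_of_lt hj')] at hij
          exact hinj _ _ hi' hj' hij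
        · rw [Function.update_of_ne (Nat.ne_of_lt hi'), Function.update_self] at hij
          exact (hwS ⟨i, hi', hij⟩).elim
      · rcases Nat.lt_succ_iff_lt_or_eq.1 hj with hj' | rfl
        · rw [Function.update_self, Function.update_of_ne (Nat.ne_of_lt hj')] at hij
          exact (hwS ⟨j, hj', hij.symm⟩).elim
        · rfl
    · intro i hi
      rcases Nat.lt_succ_iff_lt_or_eq.1 hi with hi' | rfl
      · rw [Function.update_of_ne (Nat.ne_of_lt hi')]; exact hdist i hi'
      · rw [Function.update_self]; exact hw

/-- perturbation adapted to pseudo-orbits / cycles -/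
lemma exists_good_perturb [PerfectSpace X] (x : ℕ → X) {τ : ℝ} (hτ : 0 < τ) (m : ℕ)
    (hm : 1 ≤ m) :
    ∃ x' : ℕ → X, (∀ i ≤ m, dist (x' i) (x i) < τ) ∧
      (∀ i j, i < m → j < m → x' i = x' j → i = j) ∧
      (∀ i j, i < m → j < m → x' (i + 1) = x' (j + 1) → i = j) ∧
      (x 0 = x m → x' m = x' 0) := by
  by_cases hc : x 0 = x m
  · obtain ⟨z', hinj, hdist⟩ := exists_inj_perturb x hτ m
    have hm0 : (0 : ℕ) ≠ m := by omega
    refine ⟨fun i => if i = m then z' 0 else z' i, ?_, ?_, ?_, ?_⟩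
    · intro i hi
      by_cases h : i = m
      · simp only [h, if_pos]
        calc dist (z' 0) (x m) = dist (z' 0) (x 0) := by rw [hc]
        _ < τ := hdist 0 hm
      · simp only [if_neg h]
        exact hdist i (lt_of_le_of_ne hi h)
    · intro i j hi hj hij
      simp only [if_neg (Nat.ne_of_lt hi), if_neg (Nat.ne_of_lt hj)] at hij
      exact hinj _ _ hi hj hij
    · intro i j hi hj hij
      by_cases h1 : i + 1 = m <;> by_cases h2 : j + 1 = m
      · omega
      · simp only [if_pos h1, if_neg h2] at hij
        have := hinj 0 (j + 1) hm (by omega) hij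
        omega
      · simp only [if_neg h1, if_pos h2] at hij
        have := hinj (i + 1) 0 (by omega) hm hij
        omega
      · simp only [if_neg h1, if_neg h2] at hij
        have := hinj (i + 1) (j + 1) (by omega) (by omega) hij
        omega
    · intro _
      simp [hm0.symm, hm0]
  · obtain ⟨z', hinj, hdist⟩ := exists_inj_perturb x hτ (m + 1)
    refine ⟨z', fun i hi => hdist i (by omega), fun i j hi hj h => hinj i j (by omega) (by omega) h,
      fun i j hi hj h => by have := hinj (i+1) (j+1) (by omega) (by omega) h; omega,
      fun h => absurd h hc⟩


end H2

section Key
variable {X : Type*} [MetricSpace X] [CompactSpace X] [PerfectSpace X]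

lemma key_finite (hstar : PropertyStar X) (f : X ≃ₜ X) (hf : TopologicallyStable f) :
    ∀ ε > 0, ∃ δ > 0, ∀ (m : ℕ) (x : ℕ → X), 1 ≤ m →
      (∀ i < m, dist (f (x i)) (x (i + 1)) ≤ δ) →
      ∃ p : X, (x 0 = x m → (f : X → X)^[m] p = p) ∧
        ∀ i ≤ m, dist (x i) ((f : X → X)^[i] p) ≤ ε := by
  intro ε hε
  -- topological stability with ε/2
  obtain ⟨δs, hδs, hstab⟩ := hf (ε / 2) (by linarith)
  -- uniform continuity of f⁻¹
  obtain ⟨η1, hη1, hfsym⟩ := Metric.uniformContinuous_iff.1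
    (CompactSpace.uniformContinuous_of_continuous f.symm.continuous) (δs / 2) (by linarith)
  set ε0 : ℝ := min (δs / 2) η1 with hε0def
  have hε0 : 0 < ε0 := lt_min (by linarith) hη1
  -- property*
  obtain ⟨δstar, hδstar, hφ⟩ := hstar ε0 hε0
  -- uniform continuity of f
  obtain ⟨η2, hη2, hfc⟩ := Metric.uniformContinuous_iff.1
    (CompactSpace.uniformContinuous_of_continuous f.continuous) (δstar / 4) (by linarith)
  set τ : ℝ := min (min (ε / 2) (δstar / 4)) η2 with hτdef
  have hτ : 0 < τ := lt_min (lt_min (by linarith) (by linarith)) hη2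
  refine ⟨δstar / 4, by linarith, ?_⟩
  intro m x hm hx
  obtain ⟨x', hxd, hinj, hinjs, hcyc⟩ := exists_good_perturb x hτ m hm
  -- distances between consecutive images
  have hclose : ∀ i < m, dist (f (x' i)) (x' (i + 1)) < δstar := by
    intro i hi
    have h1 : dist (f (x' i)) (f (x i)) < δstar / 4 :=
      hfc (lt_of_lt_of_le (hxd i (le_of_lt hi)) (min_le_right _ _))
    have h2 : dist (x' (i + 1)) (x (i + 1)) < τ := hxd (i + 1) (by omega)
    have h3 : dist (f (x i)) (x (i + 1)) ≤ δstar / 4 := hx i hi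
    have hτ4 : τ ≤ δstar / 4 := le_trans (min_le_left _ _) (min_le_right _ _)
    calc dist (f (x' i)) (x' (i + 1))
        ≤ dist (f (x' i)) (f (x i)) + dist (f (x i)) (x (i + 1)) + dist (x (i + 1)) (x' (i + 1)) :=
          dist_triangle4 _ _ _ _
      _ < δstar / 4 + δstar / 4 + δstar / 4 := by
          rw [dist_comm (x (i+1))]; linarith
      _ < δstar := by linarith
  -- apply property*
  have hminj : Function.Injective (fun i : Fin m => f (x' (i : ℕ))) := by
    intro i j hij
    have := f.injective hij
    exact Fin.ext (hinj _ _ i.isLt j.isLt this)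
  have hminj' : Function.Injective (fun i : Fin m => x' ((i : ℕ) + 1)) := by
    intro i j hij
    exact Fin.ext (hinjs _ _ i.isLt j.isLt hij)
  obtain ⟨φ, hφD, hφmap⟩ := hφ m (fun i : Fin m => f (x' (i : ℕ)))
    (fun i : Fin m => x' ((i : ℕ) + 1)) hm hminj hminj'
    (fun i => hclose (i : ℕ) i.isLt)
  -- the perturbed homeomorphism g = φ ∘ f
  set g : X ≃ₜ X := f.trans φ with hgdef
  have hgapp : ∀ y, g y = φ (f y) := fun y => rfl
  have hgsymm : ∀ y, g.symm y = f.symm (φ.symm y) := fun y => rfl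
  -- DH f g < δs
  have hφ1 : dC0 (φ : X → X) (Homeomorph.refl X : X → X) < ε0 := lt_of_le_of_lt (le_max_left _ _) hφD
  have hφ2 : dC0 (φ.symm : X → X) ((Homeomorph.refl X).symm : X → X) < ε0 :=
    lt_of_le_of_lt (le_max_right _ _) hφD
  have hφ1' : ∀ y : X, dist (φ y) y < ε0 := by
    intro y
    have := dist_le_dC0 (φ : X → X) (Homeomorph.refl X : X → X) y
    simpa using lt_of_le_of_lt this hφ1
  have hφ2' : ∀ y : X, dist (φ.symm y) y < ε0 := by
    intro y
    have := dist_le_dC0 (φ.symm : X → X) ((Homeomorph.refl X).symm : X → X) y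
    simpa using lt_of_le_of_lt this hφ2
  have hDfg : DH f g < δs := by
    have h1 : dC0 (f : X → X) (g : X → X) ≤ δs / 2 := by
      apply dC0_le (by linarith)
      intro y
      rw [hgapp, dist_comm]
      exact le_trans (le_of_lt (hφ1' (f y))) (le_trans (min_le_left _ _) le_rfl)
    have h2 : dC0 (f.symm : X → X) (g.symm : X → X) ≤ δs / 2 := by
      apply dC0_le (by linarith)
      intro y
      rw [hgsymm]
      have : dist (φ.symm y) y < η1 := lt_of_lt_of_le (hφ2' y) (min_le_right _ _)
      have := hfsym (by rwa [dist_comm] : dist y (φ.symm y) < η1)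
      exact le_of_lt this
    exact max_lt (lt_of_le_of_lt h1 (by linarith)) (lt_of_le_of_lt h2 (by linarith))
  obtain ⟨h, hhc, hhd, hconj⟩ := hstab g hDfg
  have hhd' : ∀ y : X, dist (h y) y < ε / 2 := by
    intro y
    have := dist_le_dC0 h id y
    simpa using lt_of_le_of_lt this hhd
  -- orbit of g through x'
  have horb : ∀ i ≤ m, (g : X → X)^[i] (x' 0) = x' i := by
    intro i hi
    induction i with
    | zero => simp
    | succ i ih =>
      rw [Function.iterate_succ_apply', ih (by omega), hgapp]
      have := hφmap ⟨i, by omega⟩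
      simpa using this
  -- semiconjugacy iterated
  have hsemi : ∀ (i : ℕ) (z : X), (f : X → X)^[i] (h z) = h ((g : X → X)^[i] z) := by
    intro i
    induction i with
    | zero => intro z; simp
    | succ i ih =>
      intro z
      rw [Function.iterate_succ_apply', Function.iterate_succ_apply', ih]
      exact congrFun hconj.symm ((g : X → X)^[i] z)
  refine ⟨h (x' 0), ?_, ?_⟩
  · intro hc
    rw [hsemi m (x' 0), horb m le_rfl, hcyc hc]
  · intro i hi
    rw [hsemi i (x' 0), horb i hi]
    have h1 : dist (x i) (x' i) < τ := by rw [dist_comm]; exact hxd i hi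
    have h2 : dist (x' i) (h (x' i)) < ε / 2 := by rw [dist_comm]; exact hhd' (x' i)
    have hτε : τ ≤ ε / 2 := le_trans (min_le_left _ _) (min_le_left _ _)
    calc dist (x i) (h (x' i)) ≤ dist (x i) (x' i) + dist (x' i) (h (x' i)) := dist_triangle _ _ _
      _ ≤ ε := by linarith

end Key

/-- On a perfect compact metric space with the property*, every
topologically stable homeomorphism has the shadowing property and the strict
periodic shadowing property; in particular `CR(f) = closure (Per(f))`. -/
theorem topologicallyStable_shadowing_of_propertyStar
    {X : Type*} [MetricSpace X] [CompactSpace X] [PerfectSpace X]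
    (hstar : PropertyStar X) (f : X ≃ₜ X) (hf : TopologicallyStable f) :
    HasShadowing f ∧ StrictPeriodicShadowing f ∧
      {x : X | ChainRecurrent (f : X → X) x} =
        closure (Function.periodicPts (f : X → X)) := by
  classical
  have spsh : StrictPeriodicShadowing f := by
    intro ε hε
    obtain ⟨δ, hδ, hkey⟩ := key_finite hstar f hf ε hε
    refine ⟨δ, hδ, ?_⟩
    intro m x hm hx hc
    obtain ⟨p, hper, hsh⟩ := hkey m x hm hx
    exact ⟨p, hper hc, hsh⟩
  have shad : HasShadowing f := by
    intro ε hε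
    obtain ⟨δ, hδ, hkey⟩ := key_finite hstar f hf (ε / 2) (by linarith)
    refine ⟨δ, hδ, ?_⟩
    intro x hx
    set K : ℕ → Set X :=
      fun n => ⋂ i ∈ Set.Iic (n + 1), {p : X | dist (x i) ((f : X → X)^[i] p) ≤ ε / 2}
      with hKdef
    have hKmem : ∀ n p, p ∈ K n ↔ ∀ i ≤ n + 1, dist (x i) ((f : X → X)^[i] p) ≤ ε / 2 := by
      intro n p
      simp [hKdef, Set.mem_iInter]
    have hKne : ∀ n, (K n).Nonempty := by
      intro n
      obtain ⟨p, _, hp⟩ := hkey (n + 1) x (by omega) (fun i _ => hx i)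
      exact ⟨p, (hKmem n p).2 hp⟩
    have hKsub : ∀ n, K (n + 1) ⊆ K n := by
      intro n p hp
      exact (hKmem n p).2 fun i hi => (hKmem (n + 1) p).1 hp i (by omega)
    have hKcl : ∀ n, IsClosed (K n) := by
      intro n
      refine isClosed_biInter fun i _ => ?_
      exact isClosed_le (Continuous.dist continuous_const (f.continuous.iterate i))
        continuous_const
    obtain ⟨p, hp⟩ := IsCompact.nonempty_iInter_of_sequence_nonempty_isCompact_isClosed K
      hKsub hKne ((hKcl 0).isCompact) hKcl
    refine ⟨p, fun i => ?_⟩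
    have := (hKmem i p).1 (Set.mem_iInter.1 hp i) i (by omega)
    linarith
  refine ⟨shad, spsh, ?_⟩
  apply Set.Subset.antisymm
  · -- chain recurrent ⊆ closure of periodic points
    intro x hx
    rw [Metric.mem_closure_iff]
    intro ε hε
    obtain ⟨δ, hδ, hS⟩ := spsh (ε / 2) (by linarith)
    obtain ⟨m, c, hm, hc0, hcm, hcyc⟩ := hx δ hδ
    obtain ⟨p, hper, hsh⟩ := hS m c hm hcyc (hc0.trans hcm.symm)
    refine ⟨p, Function.mem_periodicPts.2 ⟨m, hm, hper⟩, ?_⟩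
    have h0 := hsh 0 (by omega)
    simp only [Function.iterate_zero, id_eq] at h0
    rw [← hc0]
    calc dist (c 0) p ≤ ε / 2 := h0
      _ < ε := by linarith
  · -- closure of periodic points ⊆ chain recurrent
    intro x hx
    intro δ hδ
    obtain ⟨η, hη, hfc⟩ := Metric.uniformContinuous_iff.1
      (CompactSpace.uniformContinuous_of_continuous f.continuous) (δ / 3) (by linarith)
    obtain ⟨y, hyper, hxy⟩ := Metric.mem_closure_iff.1 hx (min η (δ / 3))
      (lt_min hη (by linarith))
    obtain ⟨n, hn, hny⟩ := Function.mem_periodicPts.1 hyper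
    have hny' : (f : X → X)^[n] y = y := hny
    have hxyη : dist x y < η := lt_of_lt_of_le hxy (min_le_left _ _)
    have hxy3 : dist x y < δ / 3 := lt_of_lt_of_le hxy (min_le_right _ _)
    refine ⟨n, fun i => if i = 0 ∨ i = n then x else (f : X → X)^[i] y, by omega, ?_, ?_, ?_⟩
    · simp
    · simp
    · intro i hi
      show dist ((f : X → X) (if i = 0 ∨ i = n then x else (f : X → X)^[i] y))
        (if i + 1 = 0 ∨ i + 1 = n then x else (f : X → X)^[i + 1] y) ≤ δ
      have hci : (if i = 0 ∨ i = n then x else (f : X → X)^[i] y)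
          = if i = 0 then x else (f : X → X)^[i] y := by
        rcases eq_or_ne i 0 with rfl | h0
        · simp
        · have : ¬ (i = 0 ∨ i = n) := by omega
          rw [if_neg this, if_neg h0]
      rw [hci]
      rcases eq_or_ne i 0 with rfl | h0
      · rcases eq_or_ne n 1 with rfl | hn1
        · have hfy : (f : X → X) y = y := by simpa using hny'
          simp only [if_pos (Or.inr rfl), Or.inl rfl, if_pos]
          calc dist (f x) x ≤ dist (f x) (f y) + dist (f y) x := dist_triangle _ _ _
            _ = dist (f x) (f y) + dist y x := by rw [hfy]
            _ ≤ δ / 3 + δ / 3 := by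
                have := hfc hxyη
                have := hxy3
                rw [dist_comm y x]
                linarith [le_of_lt (hfc hxyη), le_of_lt hxy3]
            _ ≤ δ := by linarith
        · have h1n : ¬ ((0 : ℕ) + 1 = 0 ∨ 0 + 1 = n) := by omega
          rw [if_pos rfl, if_neg h1n]
          have : (f : X → X)^[0 + 1] y = f y := by simp
          rw [this]
          calc dist (f x) (f y) ≤ δ / 3 := le_of_lt (hfc hxyη)
            _ ≤ δ := by linarith
      · have hii : ¬ (i = 0 ∨ i = n) := by omega
        rw [if_neg (by omega : ¬ (i = 0))]
        have hfit : (f : X → X) ((f : X → X)^[i] y) = (f : X → X)^[i + 1] y :=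
          (Function.iterate_succ_apply' _ _ _).symm
        rw [hfit]
        rcases eq_or_ne (i + 1) n with hin | hin
        · rw [if_pos (Or.inr hin), hin, hny']
          calc dist y x ≤ δ / 3 := by rw [dist_comm]; exact le_of_lt hxy3
            _ ≤ δ := by linarith
        · rw [if_neg (by omega : ¬ (i + 1 = 0 ∨ i + 1 = n))]
          simp [le_of_lt hδ]
end

section
/- Let (X,d) be a Cantor space. Then there exists a homeomorphism f of X which has the continuous shadowing property but is not topologically stable. -/
/-! Common definitions: distances on maps/homeomorphisms of a metric space,
topological stability and shadowing-type properties. -/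

variable {X : Type*} [MetricSpace X]

open Set Metric

namespace CantorOdo

variable {X : Type*} [MetricSpace X] [CompactSpace X] [PerfectSpace X]
  [TotallyDisconnectedSpace X] [Nonempty X]

/-- A weak partition: clopen, small, disjoint pieces covering `A` (pieces may be empty). -/
structure WPart (ε : ℝ) (A : Set X) (k : ℕ) (D : ℕ → Set X) : Prop where
  clopen : ∀ i < k, IsClopen (D i)
  small : ∀ i < k, ∀ x ∈ D i, ∀ y ∈ D i, dist x y ≤ ε
  disj : ∀ i j, i < j → j < k → ∀ z, z ∈ D i → z ∉ D j
  union : (⋃ i ∈ Finset.range k, D i) = A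

/-- A strong partition: additionally all pieces are nonempty. -/
structure SPart (ε : ℝ) (A : Set X) (k : ℕ) (D : ℕ → Set X) : Prop where
  clopen : ∀ i < k, IsClopen (D i)
  nonempty : ∀ i < k, (D i).Nonempty
  small : ∀ i < k, ∀ x ∈ D i, ∀ y ∈ D i, dist x y ≤ ε
  disj : ∀ i j, i < j → j < k → ∀ z, z ∈ D i → z ∉ D j
  union : (⋃ i ∈ Finset.range k, D i) = A

theorem exists_wpart {A : Set X} (hA : IsClopen A) {ε : ℝ} (hε : 0 < ε) :
    ∃ k D, WPart ε A k D := by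
  classical
  -- choose small clopen neighborhoods
  have hV : ∀ x : X, ∃ V : Set X, IsClopen V ∧ (x ∈ A → x ∈ V) ∧ V ⊆ A ∧
      ∀ a ∈ V, ∀ b ∈ V, dist a b ≤ ε := by
    intro x
    by_cases hx : x ∈ A
    · obtain ⟨V, hVc, hxV, hVsub⟩ :=
        compact_exists_isClopen_in_isOpen (hA.2.inter isOpen_ball) ⟨hx, mem_ball_self (by positivity : (0:ℝ) < ε/2)⟩
      refine ⟨V, hVc, fun _ => hxV, fun y hy => (hVsub hy).1, ?_⟩
      intro a ha b hb
      have h1 : dist a x < ε/2 := (hVsub ha).2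
      have h2 : dist b x < ε/2 := (hVsub hb).2
      calc dist a b ≤ dist a x + dist x b := dist_triangle a x b
        _ ≤ ε := by rw [dist_comm x b]; linarith
    · exact ⟨∅, isClopen_empty, fun h => absurd h hx, empty_subset _, fun a ha => absurd ha (notMem_empty a)⟩
  choose V hVc hVmem hVsub hVsmall using hV
  -- finite subcover
  have hAcomp : IsCompact A := hA.1.isCompact
  obtain ⟨t, ht⟩ := hAcomp.elim_finite_subcover V (fun x => (hVc x).2)
    (fun x hx => mem_iUnion.2 ⟨x, hVmem x hx⟩)
  set l : List X := t.toList with hl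
  set k : ℕ := l.length with hk
  have x₀ : X := Classical.arbitrary X
  set W : ℕ → Set X := fun i => V (l.getD i x₀) with hW
  refine ⟨k, fun i => (A ∩ W i) \ ⋃ j ∈ Finset.range i, W j, ?_, ?_, ?_, ?_⟩
  · intro i hi
    exact ((hA.inter (hVc _)).diff (isClopen_biUnion_finset fun j _ => hVc _))
  · intro i hi x hx y hy
    exact hVsmall _ _ hx.1.2 _ hy.1.2
  · intro i j hij hj z hzi hzj
    exact hzj.2 (mem_biUnion (Finset.mem_range.2 hij) hzi.1.2)
  · apply Subset.antisymm
    · intro x hx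
      simp only [mem_iUnion] at hx
      obtain ⟨i, _, hxi⟩ := hx
      exact hxi.1.1
    · intro x hx
      have : ∃ i, i < k ∧ x ∈ W i := by
        have := ht hx
        simp only [mem_iUnion] at this
        obtain ⟨y, hyt, hxy⟩ := this
        have : y ∈ l := (Finset.mem_toList).2 hyt
        obtain ⟨i, hik, hi⟩ := List.getElem_of_mem this
        refine ⟨i, hik, ?_⟩
        simp only [hW]
        rw [List.getD_eq_getElem l x₀ hik, hi]
        exact hxy
      have hfind := Nat.find_spec this
      set i₀ := Nat.find this with hi₀
      simp only [mem_iUnion]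
      refine ⟨i₀, Finset.mem_range.2 hfind.1, ⟨hx, hfind.2⟩, ?_⟩
      intro hmem
      simp only [mem_iUnion] at hmem
      obtain ⟨j, hj, hxj⟩ := hmem
      rw [Finset.mem_range] at hj
      exact Nat.find_min this hj ⟨lt_trans hj hfind.1, hxj⟩

set_option linter.unusedSectionVars false

/-- Split a nonempty clopen set into two disjoint nonempty clopen pieces. -/
theorem exists_split {A : Set X} (hA : IsClopen A) (hne : A.Nonempty) :
    ∃ U V : Set X, IsClopen U ∧ IsClopen V ∧ U.Nonempty ∧ V.Nonempty ∧
      (∀ z, z ∈ U → z ∉ V) ∧ U ∪ V = A := by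
  obtain ⟨x, hx⟩ := hne
  have hmem : A ∈ nhds x := hA.2.mem_nhds hx
  have h2 : (A ∩ {x}ᶜ).Nonempty := by
    have h1 : A ∈ nhdsWithin x {x}ᶜ := mem_nhdsWithin_of_mem_nhds hmem
    have h2 : ({x}ᶜ : Set X) ∈ nhdsWithin x {x}ᶜ := self_mem_nhdsWithin
    exact Filter.nonempty_of_mem (Filter.inter_mem h1 h2)
  obtain ⟨y, hyA, hyx⟩ := h2
  have hne' : x ≠ y := fun h => hyx (h ▸ rfl)
  obtain ⟨U, hUc, hxU, hyU⟩ := exists_isClopen_of_totally_separated hne'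
  refine ⟨A ∩ U, A \ U, hA.inter hUc, hA.diff hUc, ⟨x, hx, hxU⟩, ⟨y, hyA, hyU⟩, ?_, ?_⟩
  · intro z hz hz'
    exact hz'.2 hz.2
  · ext z
    constructor
    · rintro (h | h) <;> exact h.1
    · intro hz
      by_cases hzU : z ∈ U
      · exact Or.inl ⟨hz, hzU⟩
      · exact Or.inr ⟨hz, hzU⟩

/-- Prune a weak partition of a nonempty set to a strong partition. -/
theorem wpart_to_spart {ε : ℝ} :
    ∀ k (A : Set X) (D : ℕ → Set X), WPart ε A k D → A.Nonempty →
      ∃ k' D', 1 ≤ k' ∧ SPart ε A k' D' := by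
  intro k
  induction k with
  | zero =>
    intro A D hW hne
    obtain ⟨x, hx⟩ := hne
    rw [← hW.union] at hx
    simp at hx
  | succ k ih =>
    intro A D hW hne
    set B : Set X := ⋃ i ∈ Finset.range k, D i with hB
    have hunion : B ∪ D k = A := by
      rw [← hW.union]
      ext z
      simp only [hB, mem_union, mem_iUnion, Finset.mem_range]
      constructor
      · rintro (⟨i, hi, h⟩ | h)
        · exact ⟨i, by omega, h⟩
        · exact ⟨k, by omega, h⟩
      · rintro ⟨i, hi, h⟩
        rcases Nat.lt_or_ge i k with h' | h'
        · exact Or.inl ⟨i, h', h⟩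
        · have : i = k := by omega
          exact Or.inr (this ▸ h)
    have hWB : WPart ε B k D :=
      ⟨fun i hi => hW.clopen i (by omega), fun i hi => hW.small i (by omega),
       fun i j hij hj => hW.disj i j hij (by omega), rfl⟩
    by_cases hDk : (D k).Nonempty
    · by_cases hBne : B.Nonempty
      · obtain ⟨k', D', hk', hS⟩ := ih B D hWB hBne
        refine ⟨k' + 1, fun i => if i < k' then D' i else D k, by omega, ?_, ?_, ?_, ?_, ?_⟩
        · intro i hi
          by_cases h : i < k'
          · simpa [h] using hS.clopen i h
          · simpa [h] using hW.clopen k (by omega)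
        · intro i hi
          by_cases h : i < k'
          · simpa [h] using hS.nonempty i h
          · simpa [h] using hDk
        · intro i hi x hx y hy
          by_cases h : i < k'
          · simp only [h, if_true] at hx hy
            exact hS.small i h x hx y hy
          · simp only [h, if_false] at hx hy
            exact hW.small k (by omega) x hx y hy
        · intro i j hij hj z hzi hzj
          have hik' : i < k' ∨ ¬ i < k' := em _
          by_cases hj' : j < k'
          · have hi' : i < k' := by omega
            simp only [hi', hj', if_true] at hzi hzj
            exact hS.disj i j hij hj' z hzi hzj
          · have hi' : i < k' := by omega
            simp only [hi', hj', if_true, if_false] at hzi hzj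
            -- z ∈ D' i ⊆ B and z ∈ D k; but B and D k are disjoint
            have hzB : z ∈ B := by
              rw [← hS.union]
              exact mem_biUnion (Finset.mem_range.2 hi') hzi
            simp only [hB, mem_iUnion, Finset.mem_range] at hzB
            obtain ⟨i', hi'', hzi'⟩ := hzB
            exact hW.disj i' k hi'' (by omega) z hzi' hzj
        · rw [← hunion]
          ext z
          simp only [mem_iUnion, Finset.mem_range, mem_union]
          constructor
          · rintro ⟨i, hi, h⟩
            by_cases h' : i < k'
            · simp only [h', if_true] at h
              exact Or.inl (by rw [← hS.union]; exact mem_biUnion (Finset.mem_range.2 h') h)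
            · simp only [h', if_false] at h
              exact Or.inr h
          · rintro (h | h)
            · rw [← hS.union] at h
              simp only [mem_iUnion, Finset.mem_range] at h
              obtain ⟨i, hi, h⟩ := h
              exact ⟨i, by omega, by simp [hi, h]⟩
            · exact ⟨k', by omega, by simp [h]⟩
      · -- B empty, so A = D k
        have hAD : A = D k := by
          rw [← hunion]
          rw [not_nonempty_iff_eq_empty] at hBne
          rw [hBne, empty_union]
        refine ⟨1, fun _ => A, le_refl 1, ?_, ?_, ?_, ?_, ?_⟩
        · intro i hi; rw [hAD]; exact hW.clopen k (by omega)
        · intro i hi; exact hne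
        · intro i hi x hx y hy
          rw [hAD] at hx hy
          exact hW.small k (by omega) x hx y hy
        · intro i j hij hj; omega
        · simp
    · -- D k empty
      rw [not_nonempty_iff_eq_empty] at hDk
      have : B = A := by rw [← hunion, hDk, union_empty]
      exact ih A D (this ▸ hWB) hne

/-- From a strong partition with `k ≥ 1` pieces, get one with `k+1` pieces. -/
theorem spart_succ {ε : ℝ} {A : Set X} {k : ℕ} {D : ℕ → Set X}
    (hS : SPart ε A k D) (hk : 1 ≤ k) : ∃ D', SPart ε A (k + 1) D' := by
  obtain ⟨U, V, hUc, hVc, hUne, hVne, hUV, hUVu⟩ :=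
    exists_split (hS.clopen (k-1) (by omega)) (hS.nonempty (k-1) (by omega))
  refine ⟨fun i => if i < k - 1 then D i else if i = k - 1 then U else V, ?_, ?_, ?_, ?_, ?_⟩
  · intro i hi
    by_cases h1 : i < k - 1
    · simpa [h1] using hS.clopen i (by omega)
    · by_cases h2 : i = k - 1 <;> simp [h1, h2, hUc, hVc]
  · intro i hi
    by_cases h1 : i < k - 1
    · simpa [h1] using hS.nonempty i (by omega)
    · by_cases h2 : i = k - 1 <;> simp [h1, h2, hUne, hVne]
  · intro i hi x hx y hy
    have hsub : U ∪ V ⊆ D (k-1) := hUVu.le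
    by_cases h1 : i < k - 1
    · simp only [h1, if_true] at hx hy
      exact hS.small i (by omega) x hx y hy
    · by_cases h2 : i = k - 1 <;>
      · simp only [h1, h2, lt_self_iff_false, if_true, if_false] at hx hy
        first
        | exact hS.small (k-1) (by omega) x (hsub (Or.inl hx)) y (hsub (Or.inl hy))
        | exact hS.small (k-1) (by omega) x (hsub (Or.inr hx)) y (hsub (Or.inr hy))
  · intro i j hij hj z hzi hzj
    have hsub : U ∪ V ⊆ D (k-1) := hUVu.le
    by_cases h1 : i < k - 1
    · simp only [h1, if_true] at hzi
      by_cases h2 : j < k - 1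
      · simp only [h2, if_true] at hzj
        exact hS.disj i j hij (by omega) z hzi hzj
      · by_cases h3 : j = k - 1
        · simp only [h2, h3, lt_self_iff_false, if_false, if_true] at hzj
          exact hS.disj i (k-1) (by omega) (by omega) z hzi (hsub (Or.inl hzj))
        · simp only [h2, h3, if_false] at hzj
          exact hS.disj i (k-1) (by omega) (by omega) z hzi (hsub (Or.inr hzj))
    · -- i ≥ k-1, so i = k-1 (U) and j = k (V)
      have hik : i = k - 1 := by omega
      have hjk : j = k := by omega
      simp only [h1, hik, lt_self_iff_false, if_false, if_true] at hzi
      have : ¬ (j < k - 1) := by omega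
      have : ¬ (j = k - 1) := by omega
      simp only [‹¬ (j < k-1)›, ‹¬ (j = k-1)›, if_false] at hzj
      exact hUV z hzi hzj
  · ext z
    simp only [mem_iUnion, Finset.mem_range]
    rw [← hS.union]
    simp only [mem_iUnion, Finset.mem_range]
    constructor
    · rintro ⟨i, hi, h⟩
      by_cases h1 : i < k - 1
      · simp only [h1, if_true] at h
        exact ⟨i, by omega, h⟩
      · by_cases h2 : i = k - 1 <;>
        · simp only [h1, h2, lt_self_iff_false, if_true, if_false] at h
          refine ⟨k - 1, by omega, ?_⟩
          first
          | exact hUVu.le (Or.inl h)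
          | exact hUVu.le (Or.inr h)
    · rintro ⟨i, hi, h⟩
      by_cases h1 : i < k - 1
      · exact ⟨i, by omega, by simp [h1, h]⟩
      · have : i = k - 1 := by omega
        subst this
        rw [← hUVu] at h
        rcases h with h | h
        · exact ⟨k - 1, by omega, by simp [h]⟩
        · refine ⟨k, by omega, ?_⟩
          have h1 : ¬ (k < k - 1) := by omega
          have h2 : ¬ (k = k - 1) := by omega
          simp [h1, h2, h]

/-- Master partition lemma: `∃ k₀ ≥ 1` such that for every `k ≥ k₀` the set `A`
admits a strong partition into exactly `k` pieces of diameter `≤ ε`. -/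
theorem exists_spart_exact {A : Set X} (hA : IsClopen A) (hne : A.Nonempty)
    {ε : ℝ} (hε : 0 < ε) :
    ∃ k₀, 1 ≤ k₀ ∧ ∀ k, k₀ ≤ k → ∃ D, SPart ε A k D := by
  obtain ⟨k, D, hW⟩ := exists_wpart hA hε
  obtain ⟨k', D', hk', hS⟩ := wpart_to_spart k A D hW hne
  refine ⟨k', hk', ?_⟩
  intro k hk
  induction k with
  | zero => omega
  | succ k ih =>
    rcases Nat.lt_or_ge k' (k+1) with h | h
    · obtain ⟨D'', hS''⟩ := ih (by omega)
      obtain ⟨D₃, h₃⟩ := spart_succ hS'' (by omega)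
      exact ⟨D₃, h₃⟩
    · have : k' = k + 1 := by omega
      exact ⟨D', this ▸ hS⟩

/-- A cyclically-indexed clopen partition of `X`. -/
structure CPart (X : Type*) [MetricSpace X] where
  M : ℕ
  eps : ℝ
  A : ℤ → Set X
  hM : 0 < M
  clopen : ∀ r, IsClopen (A r)
  nonempty : ∀ r, (A r).Nonempty
  period : ∀ r, A (r + M) = A r
  cover : ∀ x, ∃ r, x ∈ A r
  disj : ∀ r s z, z ∈ A r → z ∈ A s → (M : ℤ) ∣ r - s
  small : ∀ r, ∀ x ∈ A r, ∀ y ∈ A r, dist x y ≤ eps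

namespace CPart

variable {X : Type*} [MetricSpace X]

theorem A_eq (p : CPart X) {r s : ℤ} (h : (p.M : ℤ) ∣ s - r) : p.A s = p.A r := by
  obtain ⟨c, hc⟩ := h
  have hs : s = r + (p.M : ℤ) * c := by linarith
  subst hs
  clear hc
  induction c using Int.induction_on with
  | zero => simp
  | succ k ih =>
    have : r + (p.M:ℤ) * (k + 1) = (r + p.M * k) + p.M := by ring
    rw [this, p.period, ih]
  | pred k ih =>
    have : r + (p.M:ℤ) * (-k) = (r + p.M * (-k - 1)) + p.M := by ring
    have h2 := p.period (r + (p.M:ℤ) * (-(k:ℤ)-1))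
    rw [← this] at h2
    rw [← h2]
    exact ih

theorem mem_A_iff (p : CPart X) {r s : ℤ} {x : X} (hx : x ∈ p.A r) :
    x ∈ p.A s ↔ (p.M : ℤ) ∣ s - r := by
  constructor
  · intro h
    exact p.disj s r x h hx
  · intro h
    rw [p.A_eq h]
    exact hx

end CPart

theorem int_eq_of_small {M a b : ℤ} (hdvd : M ∣ a - b) (h0a : 0 ≤ a) (haM : a < M)
    (h0b : 0 ≤ b) (hbM : b < M) : a = b := by
  obtain ⟨c, hc⟩ := hdvd
  have habs : |a - b| < M := abs_lt.2 ⟨by omega, by omega⟩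
  have := Int.eq_zero_of_abs_lt_dvd ⟨c, hc⟩ habs
  omega

theorem cpart_step (p : CPart X) {ε : ℝ} (hε : 0 < ε) :
    ∃ q : CPart X, q.eps = ε ∧ (∀ r, q.A r ⊆ p.A r) ∧ 2 * p.M ≤ q.M ∧ p.M ∣ q.M := by
  classical
  have hMpos : (0:ℤ) < (p.M : ℤ) := by exact_mod_cast p.hM
  have hpart : ∀ u : ℤ, ∃ k₀, 1 ≤ k₀ ∧ ∀ k, k₀ ≤ k → ∃ D, SPart ε (p.A u) k D :=
    fun u => exists_spart_exact (p.clopen u) (p.nonempty u) hε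
  choose k₀ hk₀1 hk₀ using hpart
  set m : ℕ := 2 ⊔ (Finset.range p.M).sup (fun i => k₀ (i : ℤ)) with hm
  have hm2 : 2 ≤ m := le_max_left _ _
  have hmk : ∀ u : ℤ, 0 ≤ u → u < p.M → k₀ u ≤ m := by
    intro u h0 hlt
    have hu : ((u.toNat : ℕ) : ℤ) = u := Int.toNat_of_nonneg h0
    have hlt' : u.toNat < p.M := by omega
    calc k₀ u = k₀ ((u.toNat : ℕ) : ℤ) := by rw [hu]
      _ ≤ (Finset.range p.M).sup (fun i => k₀ (i : ℤ)) :=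
          Finset.le_sup (f := fun i : ℕ => k₀ (i : ℤ)) (Finset.mem_range.2 hlt')
      _ ≤ m := le_max_right _ _
  have hD : ∀ u : ℤ, ∃ D, SPart ε (p.A (u % p.M)) m D := by
    intro u
    have h1 : 0 ≤ u % p.M := Int.emod_nonneg u (by omega)
    have h2 : u % p.M < p.M := Int.emod_lt_of_pos u hMpos
    exact hk₀ _ m (hmk _ h1 h2)
  choose D hDS using hD
  set Mm : ℕ := p.M * m with hMm
  have hMmpos : 0 < Mm := Nat.mul_pos p.hM (by omega)
  have hMmZ : ((Mm : ℕ) : ℤ) = (p.M : ℤ) * (m : ℤ) := by push_cast [hMm]; ring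
  have hMdvdMm : (p.M : ℤ) ∣ (Mm : ℤ) := ⟨(m : ℤ), hMmZ⟩
  -- the child index
  set kk : ℤ → ℕ := fun s => (s % (Mm : ℤ)).toNat / p.M with hkk
  have hemod0 : ∀ s : ℤ, 0 ≤ s % (Mm : ℤ) := fun s => Int.emod_nonneg s (by omega)
  have hemodlt : ∀ s : ℤ, s % (Mm : ℤ) < Mm := fun s => Int.emod_lt_of_pos s (by exact_mod_cast hMmpos)
  have hkklt : ∀ s : ℤ, kk s < m := by
    intro s
    have h1 : (s % (Mm : ℤ)).toNat < Mm := by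
      have := hemodlt s; have := hemod0 s; omega
    rw [hkk]
    exact Nat.div_lt_of_lt_mul (by rw [← hMm]; omega)
  -- s % Mm % M = s % M
  have hmodmod : ∀ s : ℤ, s % (Mm : ℤ) % (p.M : ℤ) = s % (p.M : ℤ) :=
    fun s => Int.emod_emod_of_dvd s hMdvdMm
  -- the parent set identification
  have hDS' : ∀ u : ℤ, 0 ≤ u → u < p.M → SPart ε (p.A u) m (D u) := by
    intro u h0 hlt
    have : u % (p.M : ℤ) = u := Int.emod_eq_of_lt h0 hlt
    have h := hDS u
    rwa [this] at h
  set Q : ℤ → Set X := fun s => D (s % p.M) (kk s) with hQ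
  -- basic membership: Q s ⊆ p.A s
  have hQsub : ∀ s, Q s ⊆ p.A s := by
    intro s z hz
    have h0 : 0 ≤ s % (p.M:ℤ) := Int.emod_nonneg s (by omega)
    have hlt : s % (p.M:ℤ) < p.M := Int.emod_lt_of_pos s hMpos
    have hS := hDS' (s % p.M) h0 hlt
    have hzA : z ∈ p.A (s % p.M) := by
      rw [← hS.union]
      exact mem_biUnion (Finset.mem_range.2 (hkklt s)) hz
    have : p.A s = p.A (s % p.M) := by
      apply p.A_eq
      refine ⟨s / p.M, ?_⟩
      have := Int.mul_ediv_add_emod s (p.M : ℤ)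
      linarith
    rw [this]
    exact hzA
  refine ⟨⟨Mm, ε, Q, hMmpos, ?_, ?_, ?_, ?_, ?_, ?_⟩, rfl, hQsub, ?_, ?_⟩
  · -- clopen
    intro s
    have h0 : 0 ≤ s % (p.M:ℤ) := Int.emod_nonneg s (by omega)
    have hlt : s % (p.M:ℤ) < p.M := Int.emod_lt_of_pos s hMpos
    exact (hDS' _ h0 hlt).clopen _ (hkklt s)
  · -- nonempty
    intro s
    have h0 : 0 ≤ s % (p.M:ℤ) := Int.emod_nonneg s (by omega)
    have hlt : s % (p.M:ℤ) < p.M := Int.emod_lt_of_pos s hMpos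
    exact (hDS' _ h0 hlt).nonempty _ (hkklt s)
  · -- period
    intro s
    have h1 : (s + (Mm : ℤ)) % (p.M : ℤ) = s % (p.M : ℤ) := by
      rw [show s + (Mm:ℤ) = s + (p.M:ℤ) * (m:ℤ) by rw [← hMmZ]]
      simp [Int.add_mul_emod_self_left]
    have h2 : (s + (Mm : ℤ)) % (Mm : ℤ) = s % (Mm : ℤ) := by
      simp
    simp only [hQ, hkk, h1, h2]
  · -- cover
    intro x
    obtain ⟨r0, hr0⟩ := p.cover x
    set u : ℤ := r0 % p.M with hu
    have h0 : 0 ≤ u := Int.emod_nonneg r0 (by omega)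
    have hlt : u < p.M := Int.emod_lt_of_pos r0 hMpos
    have hxu : x ∈ p.A u := by
      have : p.A u = p.A r0 := by
        apply p.A_eq
        refine ⟨-(r0 / p.M), ?_⟩
        have := Int.mul_ediv_add_emod r0 (p.M : ℤ)
        rw [hu]; linarith
      rw [this]; exact hr0
    have hS := hDS' u h0 hlt
    rw [← hS.union] at hxu
    simp only [mem_iUnion, Finset.mem_range] at hxu
    obtain ⟨i, him, hxi⟩ := hxu
    set s : ℤ := u + (p.M : ℤ) * i with hs
    have hs0 : 0 ≤ s := by
      have : (0:ℤ) ≤ (p.M:ℤ) * i := by positivity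
      omega
    have hslt : s < Mm := by
      have h1 : (i:ℤ) ≤ (m:ℤ) - 1 := by omega
      have h2 : (p.M:ℤ) * i ≤ (p.M:ℤ) * ((m:ℤ) - 1) := by
        apply mul_le_mul_of_nonneg_left h1 (by omega)
      have : (p.M:ℤ) * ((m:ℤ)-1) = (Mm:ℤ) - p.M := by rw [hMmZ]; ring
      omega
    refine ⟨s, ?_⟩
    have hsM : s % (p.M:ℤ) = u := by
      rw [hs]
      simp [Int.add_mul_emod_self_left, Int.emod_eq_of_lt h0 hlt]
    have hsMm : s % (Mm:ℤ) = s := Int.emod_eq_of_lt hs0 hslt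
    have hkks : kk s = i := by
      rw [hkk]
      simp only [hsMm]
      have htn : s.toNat = u.toNat + p.M * i := by omega
      rw [htn, Nat.add_mul_div_left _ _ p.hM, Nat.div_eq_of_lt (by omega)]
      omega
    simp only [hQ, hsM, hkks]
    exact hxi
  · -- disj
    intro r s z hzr hzs
    have h0r : 0 ≤ r % (p.M:ℤ) := Int.emod_nonneg r (by omega)
    have hltr : r % (p.M:ℤ) < p.M := Int.emod_lt_of_pos r hMpos
    have h0s : 0 ≤ s % (p.M:ℤ) := Int.emod_nonneg s (by omega)
    have hlts : s % (p.M:ℤ) < p.M := Int.emod_lt_of_pos s hMpos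
    -- same parent
    have hzr' : z ∈ p.A r := hQsub r hzr
    have hzs' : z ∈ p.A s := hQsub s hzs
    have hdvd1 : (p.M:ℤ) ∣ r - s := p.disj r s z hzr' hzs'
    have hpar : r % (p.M:ℤ) = s % (p.M:ℤ) := by
      apply int_eq_of_small (M := (p.M:ℤ)) _ h0r hltr h0s hlts
      have h1 : (p.M:ℤ) ∣ r - r % p.M := ⟨r / p.M, by have := Int.mul_ediv_add_emod r (p.M:ℤ); linarith⟩
      have h2 : (p.M:ℤ) ∣ s - s % p.M := ⟨s / p.M, by have := Int.mul_ediv_add_emod s (p.M:ℤ); linarith⟩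
      have : r % (p.M:ℤ) - s % p.M = (r - s) - (r - r % p.M) + (s - s % p.M) := by ring
      rw [this]
      exact dvd_add (dvd_sub hdvd1 h1) h2
    -- same child index
    have hS := hDS' (r % p.M) h0r hltr
    have hzs'' : z ∈ D (r % p.M) (kk s) := by rw [hQ] at hzs; rw [hpar]; exact hzs
    have hkeq : kk r = kk s := by
      rcases lt_trichotomy (kk r) (kk s) with h | h | h
      · exact absurd hzs'' (hS.disj _ _ h (hkklt s) z hzr)
      · exact h
      · exact absurd hzr (hS.disj _ _ h (hkklt r) z hzs'')
    -- now r % Mm = s % Mm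
    have har := hemod0 r; have harlt := hemodlt r
    have has := hemod0 s; have haslt := hemodlt s
    set a : ℕ := (r % (Mm:ℤ)).toNat with ha
    set b : ℕ := (s % (Mm:ℤ)).toNat with hb
    have hrm : (a:ℤ) % (p.M:ℤ) = r % (p.M:ℤ) := by
      rw [ha, Int.toNat_of_nonneg har, hmodmod r]
    have hsm : (b:ℤ) % (p.M:ℤ) = s % (p.M:ℤ) := by
      rw [hb, Int.toNat_of_nonneg has, hmodmod s]
    have hmodeq : a % p.M = b % p.M := by
      have : ((a % p.M : ℕ) : ℤ) = ((b % p.M : ℕ) : ℤ) := by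
        push_cast
        rw [hrm, hsm, hpar]
      exact_mod_cast this
    have hdiveq : a / p.M = b / p.M := hkeq
    have heq : a = b := by
      have e1 : p.M * (a / p.M) + a % p.M = a := Nat.div_add_mod a p.M
      have e2 : p.M * (b / p.M) + b % p.M = b := Nat.div_add_mod b p.M
      rw [← e1, ← e2, hmodeq, hdiveq]
    have h6 : r % (Mm:ℤ) = s % (Mm:ℤ) := by omega
    exact Int.dvd_of_emod_eq_zero (Int.emod_eq_emod_iff_emod_sub_eq_zero.mp h6)
  · -- small
    intro s x hx y hy
    have h0 : 0 ≤ s % (p.M:ℤ) := Int.emod_nonneg s (by omega)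
    have hlt : s % (p.M:ℤ) < p.M := Int.emod_lt_of_pos s hMpos
    exact (hDS' _ h0 hlt).small _ (hkklt s) x hx y hy
  · -- 2 * p.M ≤ Mm
    show 2 * p.M ≤ Mm
    rw [hMm]
    calc 2 * p.M = p.M * 2 := by ring
      _ ≤ p.M * m := Nat.mul_le_mul_left _ hm2
  · exact ⟨m, rfl⟩

variable (X) in
/-- The base partition: the whole space. -/
noncomputable def cpart₀ : CPart X where
  M := 1
  eps := Metric.diam (univ : Set X)
  A := fun _ => univ
  hM := one_pos
  clopen := fun _ => isClopen_univ
  nonempty := fun _ => univ_nonempty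
  period := fun _ => rfl
  cover := fun x => ⟨0, mem_univ x⟩
  disj := fun r s z _ _ => by simp
  small := fun r x _ y _ =>
    Metric.dist_le_diam_of_mem (isCompact_univ.isBounded) (mem_univ x) (mem_univ y)

variable (X) in
/-- The refining system of partitions. -/
noncomputable def sys : ℕ → CPart X
  | 0 => cpart₀ X
  | n + 1 => (cpart_step (sys n) (by positivity : (0:ℝ) < 1 / (n + 1))).choose

theorem sys_eps (n : ℕ) : (sys X (n + 1)).eps = 1 / (n + 1) :=
  (cpart_step (sys X n) (by positivity : (0:ℝ) < 1 / (n+1))).choose_spec.1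

theorem sys_subset (n : ℕ) (r : ℤ) : (sys X (n + 1)).A r ⊆ (sys X n).A r :=
  (cpart_step (sys X n) (by positivity : (0:ℝ) < 1 / (n+1))).choose_spec.2.1 r

theorem sys_growth (n : ℕ) : 2 * (sys X n).M ≤ (sys X (n + 1)).M :=
  (cpart_step (sys X n) (by positivity : (0:ℝ) < 1 / (n+1))).choose_spec.2.2.1

theorem sys_M_lt (n : ℕ) : n < (sys X n).M := by
  induction n with
  | zero => exact (sys X 0).hM
  | succ n ih =>
    have h1 := sys_growth (X := X) n
    have h2 := (sys X n).hM
    omega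

/-- Two points lying in a common piece at every level are equal. -/
theorem eq_of_mem_all {y z : X} (h : ∀ n : ℕ, ∃ r, y ∈ (sys X n).A r ∧ z ∈ (sys X n).A r) :
    y = z := by
  have hd : ∀ n : ℕ, dist y z ≤ 1 / (n + 1) := by
    intro n
    obtain ⟨r, hy, hz⟩ := h (n + 1)
    calc dist y z ≤ (sys X (n+1)).eps := (sys X (n+1)).small r y hy z hz
      _ = 1 / (n + 1) := sys_eps n
  have : dist y z ≤ 0 := by
    exact ge_of_tendsto' tendsto_one_div_add_atTop_nhds_zero_nat hd
  exact dist_le_zero.1 this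

/-- A point with prescribed compatible indices at every level. -/
theorem exists_point (c : ℕ → ℤ) (hc : ∀ n, ((sys X n).M : ℤ) ∣ c (n + 1) - c n) :
    ∃ y : X, ∀ n, y ∈ (sys X n).A (c n) := by
  have hsub : ∀ n, (sys X (n+1)).A (c (n+1)) ⊆ (sys X n).A (c n) := by
    intro n
    refine subset_trans (sys_subset n (c (n+1))) ?_
    rw [(sys X n).A_eq (hc n)]
  have := IsCompact.nonempty_iInter_of_sequence_nonempty_isCompact_isClosed
    (fun n => (sys X n).A (c n)) hsub (fun n => (sys X n).nonempty (c n))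
    ((sys X 0).clopen (c 0)).1.isCompact (fun n => ((sys X n).clopen (c n)).1)
  obtain ⟨y, hy⟩ := this
  exact ⟨y, fun n => mem_iInter.1 hy n⟩

/-- The level-`n` index of a point. -/
noncomputable def idx (n : ℕ) (x : X) : ℤ := ((sys X n).cover x).choose

theorem mem_idx (n : ℕ) (x : X) : x ∈ (sys X n).A (idx n x) := ((sys X n).cover x).choose_spec

theorem idx_compat (x : X) (n : ℕ) :
    ((sys X n).M : ℤ) ∣ (idx (n+1) x + c) - (idx n x + c) := by
  have h1 : x ∈ (sys X n).A (idx (n+1) x) := sys_subset n _ (mem_idx (n+1) x)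
  have h2 := (sys X n).disj _ _ x h1 (mem_idx n x)
  simpa using h2

/-- The translation by `c` in the odometer coordinates. -/
noncomputable def T (c : ℤ) (x : X) : X :=
  (exists_point (fun n => idx n x + c) (fun n => idx_compat x n)).choose

theorem T_mem' (c : ℤ) (x : X) (n : ℕ) : T c x ∈ (sys X n).A (idx n x + c) :=
  (exists_point (fun n => idx n x + c) (fun n => idx_compat x n)).choose_spec n

theorem T_mem {c : ℤ} {x : X} {n : ℕ} {r : ℤ} (h : x ∈ (sys X n).A r) :
    T c x ∈ (sys X n).A (r + c) := by
  have h1 := T_mem' c x n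
  have h2 : ((sys X n).M : ℤ) ∣ (r + c) - (idx n x + c) := by
    have := (sys X n).disj r (idx n x) x h (mem_idx n x)
    simpa using this
  rw [(sys X n).A_eq h2]
  exact h1

theorem T_T (c c' : ℤ) (x : X) : T c (T c' x) = T (c + c') x := by
  apply eq_of_mem_all
  intro n
  refine ⟨idx n x + c' + c, T_mem (T_mem' c' x n), ?_⟩
  have := T_mem' (c + c') x n
  rwa [show idx n x + (c + c') = idx n x + c' + c by ring] at this

theorem T_zero (x : X) : T 0 x = x := by
  apply eq_of_mem_all
  intro n
  exact ⟨idx n x, by simpa using T_mem' 0 x n, mem_idx n x⟩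

/-- The "gap" of a level: points closer than `δ` lie in the same pieces. -/
theorem gap (n : ℕ) : ∃ δ > 0, ∀ x y : X, dist x y < δ →
    ∀ r, x ∈ (sys X n).A r → y ∈ (sys X n).A r := by
  obtain ⟨δ, hδ, hcov⟩ := lebesgue_number_lemma_of_metric isCompact_univ
    (fun r : ℤ => ((sys X n).clopen r).2) (fun x _ => mem_iUnion.2 ((sys X n).cover x))
  refine ⟨δ, hδ, ?_⟩
  intro x y hxy r hx
  obtain ⟨r', hr'⟩ := hcov x (mem_univ x)
  have hx' : x ∈ (sys X n).A r' := hr' (mem_ball_self hδ)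
  have hy' : y ∈ (sys X n).A r' := hr' (by rwa [mem_ball, dist_comm])
  have : ((sys X n).M : ℤ) ∣ r - r' := (sys X n).disj r r' x hx hx'
  rw [(sys X n).A_eq this]
  exact hy'

theorem T_cont (c : ℤ) : Continuous (T (X := X) c) := by
  rw [Metric.continuous_iff]
  intro x ε hε
  obtain ⟨n, hn⟩ := exists_nat_one_div_lt hε
  obtain ⟨δ, hδ, hgap⟩ := gap (X := X) (n + 1)
  refine ⟨δ, hδ, ?_⟩
  intro y hyx
  have hy : y ∈ (sys X (n+1)).A (idx (n+1) x) := by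
    have := hgap x y (by rwa [dist_comm]) _ (mem_idx (n+1) x)
    exact this
  have h1 : T c y ∈ (sys X (n+1)).A (idx (n+1) x + c) := T_mem hy
  have h2 : T c x ∈ (sys X (n+1)).A (idx (n+1) x + c) := T_mem' c x (n+1)
  calc dist (T c y) (T c x) ≤ (sys X (n+1)).eps := (sys X (n+1)).small _ _ h1 _ h2
    _ = 1 / (n+1) := sys_eps n
    _ < ε := hn

variable (X) in
/-- The generalized odometer. -/
noncomputable def odo : X ≃ₜ X where
  toFun := T 1
  invFun := T (-1)
  left_inv := fun x => by rw [T_T]; simpa using T_zero x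
  right_inv := fun x => by rw [T_T]; simpa using T_zero x
  continuous_toFun := T_cont 1
  continuous_invFun := T_cont (-1)

theorem odo_zpow (i : ℤ) : ∀ x : X, ((odo X).toEquiv ^ i) x = T i x := by
  induction i using Int.induction_on with
  | zero => intro x; simpa using (T_zero x).symm
  | succ k ih =>
    intro x
    rw [zpow_add_one, Equiv.Perm.mul_apply]
    have h1 : (odo X).toEquiv x = T 1 x := rfl
    rw [h1, ih (T 1 x), T_T]
  | pred k ih =>
    intro x
    rw [zpow_sub_one, Equiv.Perm.mul_apply]
    have h1 : ((odo X).toEquiv)⁻¹ x = T (-1) x := rfl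
    rw [h1, ih (T (-1) x), T_T]
    congr 1

theorem odo_shadowing : ContinuousShadowing (odo X) := by
  intro ε hε
  obtain ⟨n, hn⟩ := exists_nat_one_div_lt hε
  obtain ⟨δ, hδpos, hgap⟩ := gap (X := X) (n + 1)
  refine ⟨δ / 2, by positivity, fun x => (x : ℤ → X) 0, ?_, ?_⟩
  · exact (continuous_apply (0 : ℤ)).comp continuous_subtype_val
  · rintro ⟨x, hx⟩ i
    simp only [PseudoOrbitsZ, mem_setOf_eq] at hx
    have claim : ∀ i : ℤ, x i ∈ (sys X (n+1)).A (idx (n+1) (x 0) + i) := by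
      intro i
      induction i using Int.induction_on with
      | zero => simpa using mem_idx (n+1) (x 0)
      | succ k ih =>
        have h2 : T 1 (x k) ∈ (sys X (n+1)).A (idx (n+1) (x 0) + k + 1) := T_mem ih
        have h3 : dist (T 1 (x k)) (x (k+1)) < δ := by
          have h4 : dist ((odo X) (x k)) (x (k+1)) ≤ δ/2 := hx k
          have h5 : (odo X) (x k) = T 1 (x k) := rfl
          rw [h5] at h4
          linarith
        have h6 := hgap _ _ h3 _ h2
        rwa [show idx (n+1) (x 0) + (k+1) = idx (n+1) (x 0) + k + 1 by ring]
      | pred k ih =>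
        have hd : dist ((odo X) (x (-k-1))) (x (-k-1+1)) ≤ δ/2 := hx (-k-1)
        rw [show (-(k:ℤ)-1+1 : ℤ) = -k by ring] at hd
        have h2 : T 1 (x (-k-1)) ∈ (sys X (n+1)).A (idx (n+1) (x 0) + -k) := by
          refine hgap (x (-k)) _ ?_ _ ih
          have h5 : (odo X) (x (-k-1)) = T 1 (x (-k-1)) := rfl
          rw [h5] at hd
          rw [dist_comm]
          linarith
        have h3 := T_mem (c := -1) h2
        have h4 : T (-1) (T 1 (x (-k-1))) = x (-k-1) := by
          rw [T_T]; simpa using T_zero _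
        rw [h4] at h3
        rwa [show idx (n+1) (x 0) + -(k:ℤ) + -1 = idx (n+1) (x 0) + (-(k:ℤ)-1) by ring] at h3
    have ha : ((odo X).toEquiv ^ i) (x 0) ∈ (sys X (n+1)).A (idx (n+1) (x 0) + i) := by
      rw [odo_zpow i (x 0)]
      exact T_mem (mem_idx (n+1) (x 0))
    have hb := claim i
    calc dist (((odo X).toEquiv ^ i) (x 0)) (x i) ≤ (sys X (n+1)).eps :=
          (sys X (n+1)).small _ _ ha _ hb
      _ = 1 / (n+1) := sys_eps n
      _ ≤ ε := le_of_lt hn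

open Classical in
/-- The truncated odometer at level `N`. -/
noncomputable def Strunc (N : ℕ) : X → X := fun x =>
  if x ∈ (sys X N).A (((sys X N).M : ℤ) - 1) then T (1 - ((sys X N).M : ℤ)) x else T 1 x

open Classical in
/-- Its inverse. -/
noncomputable def Strunc' (N : ℕ) : X → X := fun x =>
  if x ∈ (sys X N).A 0 then T (((sys X N).M : ℤ) - 1) x else T (-1) x

theorem Strunc_left_inv (N : ℕ) (x : X) : Strunc' N (Strunc N x) = x := by
  classical
  set mZ : ℤ := ((sys X N).M : ℤ) with hmZ
  by_cases hx : x ∈ (sys X N).A (mZ - 1)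
  · have h2 : T (1 - mZ) x ∈ (sys X N).A 0 := by
      have := T_mem (c := 1 - mZ) hx
      rwa [show mZ - 1 + (1 - mZ) = 0 by ring] at this
    rw [Strunc, if_pos hx, Strunc', if_pos h2, T_T,
      show mZ - 1 + (1 - mZ) = 0 by ring, T_zero]
  · have h2 : T 1 x ∉ (sys X N).A 0 := by
      intro hmem
      have h3 : T 1 x ∈ (sys X N).A (idx N x + 1) := T_mem (mem_idx N x)
      have h4 : mZ ∣ (idx N x + 1) - 0 := (sys X N).disj _ _ _ h3 hmem
      have h5 : mZ ∣ (mZ - 1) - idx N x := by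
        have e : (mZ - 1) - idx N x = mZ - ((idx N x + 1) - 0) := by ring
        rw [e]
        exact dvd_sub dvd_rfl h4
      exact hx (by rw [(sys X N).A_eq h5]; exact mem_idx N x)
    rw [Strunc, if_neg hx, Strunc', if_neg h2, T_T]
    simpa using T_zero x

theorem Strunc_right_inv (N : ℕ) (x : X) : Strunc N (Strunc' N x) = x := by
  classical
  set mZ : ℤ := ((sys X N).M : ℤ) with hmZ
  by_cases hx : x ∈ (sys X N).A 0
  · have h2 : T (mZ - 1) x ∈ (sys X N).A (mZ - 1) := by
      have := T_mem (c := mZ - 1) hx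
      rwa [zero_add] at this
    rw [Strunc', if_pos hx, Strunc, if_pos h2, T_T,
      show 1 - mZ + (mZ - 1) = 0 by ring, T_zero]
  · have h2 : T (-1) x ∉ (sys X N).A (mZ - 1) := by
      intro hmem
      have h3 : T (-1) x ∈ (sys X N).A (idx N x + -1) := T_mem (mem_idx N x)
      have h4 : mZ ∣ (idx N x + -1) - (mZ - 1) := (sys X N).disj _ _ _ h3 hmem
      have h5 : mZ ∣ (0:ℤ) - idx N x := by
        have e : (0:ℤ) - idx N x = -((idx N x + -1) - (mZ - 1)) - mZ := by ring
        rw [e]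
        exact dvd_sub (dvd_neg.2 h4) dvd_rfl
      exact hx (by rw [(sys X N).A_eq h5]; exact mem_idx N x)
    rw [Strunc', if_neg hx, Strunc, if_neg h2, T_T]
    simpa using T_zero x

theorem Strunc_continuous (N : ℕ) : Continuous (Strunc (X := X) N) := by
  classical
  apply Continuous.if ?_ (T_cont _) (T_cont _)
  intro a ha
  simp only [setOf_mem_eq, ((sys X N).clopen _).frontier_eq] at ha
  exact absurd ha (notMem_empty a)

theorem Strunc'_continuous (N : ℕ) : Continuous (Strunc' (X := X) N) := by
  classical
  apply Continuous.if ?_ (T_cont _) (T_cont _)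
  intro a ha
  simp only [setOf_mem_eq, ((sys X N).clopen _).frontier_eq] at ha
  exact absurd ha (notMem_empty a)

variable (X) in
/-- The truncated odometer as a homeomorphism. -/
noncomputable def gpert (N : ℕ) : X ≃ₜ X where
  toFun := Strunc N
  invFun := Strunc' N
  left_inv := Strunc_left_inv N
  right_inv := Strunc_right_inv N
  continuous_toFun := Strunc_continuous N
  continuous_invFun := Strunc'_continuous N

/-- The truncated odometer has period `M N`. -/
theorem Strunc_iterate (N : ℕ) (x : X) : (Strunc N)^[(sys X N).M] x = x := by
  classical
  set m : ℕ := (sys X N).M with hm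
  set mZ : ℤ := (m : ℤ) with hmZ
  have hmpos : 0 < m := (sys X N).hM
  have hmZpos : (0:ℤ) < mZ := by rw [hmZ]; exact_mod_cast hmpos
  set ρZ : ℤ := idx N x % mZ with hρZ
  have hρ0 : 0 ≤ ρZ := Int.emod_nonneg _ (by omega)
  have hρlt : ρZ < mZ := Int.emod_lt_of_pos _ hmZpos
  set ρ : ℕ := ρZ.toNat with hρ
  have hρcast : (ρ : ℤ) = ρZ := Int.toNat_of_nonneg hρ0
  have hρm : ρ < m := by omega
  have hxρ : x ∈ (sys X N).A ρZ := by
    have hd : mZ ∣ ρZ - idx N x := by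
      refine ⟨-(idx N x / mZ), ?_⟩
      have := Int.mul_ediv_add_emod (idx N x) mZ
      rw [hρZ]; linarith
    rw [(sys X N).A_eq hd]; exact mem_idx N x
  have key : ∀ k : ℕ, (Strunc N)^[k] x = T ((k:ℤ) - mZ * (((ρ + k) / m : ℕ) : ℤ)) x := by
    intro k
    induction k with
    | zero =>
      rw [Nat.add_zero, Nat.div_eq_of_lt hρm]
      simpa using (T_zero x).symm
    | succ k ih =>
      rw [Function.iterate_succ_apply', ih]
      set q : ℕ := (ρ + k) / m with hq
      set c : ℤ := (k:ℤ) - mZ * (q : ℤ) with hc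
      have hmem : T c x ∈ (sys X N).A (ρZ + c) := T_mem hxρ
      have hsd : (ρ + k + 1) / m = q + if m ∣ ρ + k + 1 then 1 else 0 := by
        rw [hq, show ρ + k + 1 = (ρ + k) + 1 by ring, Nat.succ_div]
      by_cases hd : m ∣ ρ + k + 1
      · have hdZ : mZ ∣ ((ρ:ℤ) + k + 1) := by
          have : ((ρ + k + 1 : ℕ) : ℤ) = (ρ:ℤ) + k + 1 := by push_cast; ring
          rw [← this, hmZ]
          exact_mod_cast hd
        have hbr : T c x ∈ (sys X N).A (mZ - 1) := by
          have h5 : mZ ∣ (mZ - 1) - (ρZ + c) := by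
            have e : (mZ - 1) - (ρZ + c) = mZ * ((q:ℤ) + 1) - ((ρ:ℤ) + k + 1) := by
              rw [hc, ← hρcast]; ring
            rw [e]
            exact dvd_sub (Dvd.intro _ rfl) hdZ
          rw [(sys X N).A_eq h5]
          exact hmem
        rw [Strunc, if_pos hbr, T_T]
        congr 1
        rw [← Nat.add_assoc, hsd, if_pos hd, hc]
        push_cast
        ring
      · have hbr : T c x ∉ (sys X N).A (mZ - 1) := by
          intro hmem'
          have h4 : mZ ∣ (ρZ + c) - (mZ - 1) := (sys X N).disj _ _ _ hmem hmem'
          have h5 : mZ ∣ ((ρ:ℤ) + k + 1) := by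
            have e : ((ρ:ℤ) + k + 1) = mZ * ((q:ℤ) + 1) + ((ρZ + c) - (mZ - 1)) := by
              rw [hc, ← hρcast]; ring
            rw [e]
            exact dvd_add (Dvd.intro _ rfl) h4
          have : m ∣ ρ + k + 1 := by
            have : ((m:ℤ)) ∣ ((ρ + k + 1 : ℕ) : ℤ) := by
              push_cast
              exact h5
            exact_mod_cast this
          exact hd this
        rw [Strunc, if_neg hbr, T_T]
        congr 1
        rw [← Nat.add_assoc, hsd, if_neg hd, hc]
        push_cast
        ring
  have hfin := key m
  have hdiv : (ρ + m) / m = 1 := by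
    rw [Nat.add_div_right _ hmpos, Nat.div_eq_of_lt hρm]
  rw [hdiv] at hfin
  rw [hfin]
  simpa [hmZ] using T_zero x

theorem odo_not_topStable : ¬ TopologicallyStable (odo X) := by
  intro hTS
  obtain ⟨δ, hδ, H⟩ := hTS 1 one_pos
  obtain ⟨n, hn⟩ := exists_nat_one_div_lt hδ
  set N : ℕ := n + 1 with hN
  set m : ℕ := (sys X N).M with hm
  set mZ : ℤ := (m : ℤ) with hmZ
  have hmpos : 0 < m := (sys X N).hM
  have heps : (sys X N).eps = 1 / (n+1) := sys_eps n
  have hepspos : (0:ℝ) < 1 / (n+1) := by positivity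
  -- the perturbation
  set g : X ≃ₜ X := gpert X N with hg
  have hDH : DH (odo X) g < δ := by
    have hb : ∀ x : X, dist ((odo X) x) (g x) ≤ 1 / (n+1) := by
      intro x
      classical
      by_cases hx : x ∈ (sys X N).A (mZ - 1)
      · have h1 : (odo X) x = T 1 x := rfl
        have h2 : g x = T (1 - mZ) x := by
          show Strunc N x = _
          rw [Strunc, if_pos hx]
        have h3 : T 1 x ∈ (sys X N).A 0 := by
          have h4 := T_mem (c := 1) hx
          have h5 : mZ ∣ (0:ℤ) - (mZ - 1 + 1) := ⟨-1, by ring⟩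
          rw [(sys X N).A_eq h5]
          exact h4
        have h6 : T (1 - mZ) x ∈ (sys X N).A 0 := by
          have h7 := T_mem (c := 1 - mZ) hx
          rwa [show mZ - 1 + (1 - mZ) = 0 by ring] at h7
        rw [h1, h2, ← heps]
        exact (sys X N).small 0 _ h3 _ h6
      · have h2 : g x = T 1 x := by
          show Strunc N x = _
          rw [Strunc, if_neg hx]
        have h1 : (odo X) x = T 1 x := rfl
        rw [h1, h2, dist_self]
        positivity
    have hb' : ∀ x : X, dist ((odo X).symm x) (g.symm x) ≤ 1 / (n+1) := by
      intro x
      classical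
      by_cases hx : x ∈ (sys X N).A 0
      · have h1 : (odo X).symm x = T (-1) x := rfl
        have h2 : g.symm x = T (mZ - 1) x := by
          show Strunc' N x = _
          rw [Strunc', if_pos hx]
        have h3 : T (-1) x ∈ (sys X N).A (mZ - 1) := by
          have h4 := T_mem (c := -1) hx
          have h5 : mZ ∣ (mZ - 1) - (0 + -1) := ⟨1, by ring⟩
          rw [(sys X N).A_eq h5]
          exact h4
        have h6 : T (mZ - 1) x ∈ (sys X N).A (mZ - 1) := by
          have h7 := T_mem (c := mZ - 1) hx
          rwa [zero_add] at h7
        rw [h1, h2, ← heps]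
        exact (sys X N).small _ _ h3 _ h6
      · have h2 : g.symm x = T (-1) x := by
          show Strunc' N x = _
          rw [Strunc', if_neg hx]
        have h1 : (odo X).symm x = T (-1) x := rfl
        rw [h1, h2, dist_self]
        positivity
    rw [DH]
    apply max_lt
    · exact lt_of_le_of_lt (ciSup_le hb) hn
    · exact lt_of_le_of_lt (ciSup_le hb') hn
  obtain ⟨h, hcont, hnear, hconj⟩ := H g hDH
  -- iterate the conjugacy
  have hstep : ∀ x : X, h (g x) = T 1 (h x) := fun x => congrFun hconj x
  have claim : ∀ (k : ℕ) (x : X), h ((⇑g)^[k] x) = T (k:ℤ) (h x) := by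
    intro k
    induction k with
    | zero => intro x; simpa using (T_zero (h x)).symm
    | succ k ih =>
      intro x
      rw [Function.iterate_succ_apply', hstep, ih, T_T]
      congr 1
      push_cast
      ring
  set x₀ : X := Classical.arbitrary X
  have hgm : (⇑g)^[m] x₀ = x₀ := Strunc_iterate N x₀
  have hfix : h x₀ = T mZ (h x₀) := by
    have := claim m x₀
    rw [hgm] at this
    exact this.symm ▸ this
  -- no point is fixed by T mZ
  set p : X := h x₀ with hp
  have h1 : p ∈ (sys X m).A (idx m p) := mem_idx m p
  have h2 : T mZ p ∈ (sys X m).A (idx m p + mZ) := T_mem h1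
  rw [← hfix] at h2
  have h3 : ((sys X m).M : ℤ) ∣ (idx m p + mZ) - idx m p := (sys X m).disj _ _ _ h2 h1
  have h4 : ((sys X m).M : ℤ) ∣ mZ := by simpa using h3
  have h5 : (sys X m).M ∣ m := by rw [hmZ] at h4; exact_mod_cast h4
  have h6 : (sys X m).M ≤ m := Nat.le_of_dvd hmpos h5
  have h7 : m < (sys X m).M := sys_M_lt m
  omega

end CantorOdo

/-- On any Cantor space there is a homeomorphism with the continuous
shadowing property which is not topologically stable. -/
theorem exists_continuousShadowing_not_topologicallyStable
    (X : Type*) [MetricSpace X] [CompactSpace X] [PerfectSpace X]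
    [TotallyDisconnectedSpace X] [Nonempty X] :
    ∃ f : X ≃ₜ X, ContinuousShadowing f ∧ ¬ TopologicallyStable f := by
  exact ⟨CantorOdo.odo X, CantorOdo.odo_shadowing, CantorOdo.odo_not_topStable⟩
end

section
/- Let (X,d) be a compact metric space and let f be an equicontinuous homeomorphism of X. If f has the strict periodic shadowing property, then f is topologically stable and X is totally disconnected (topological dimension zero). -/
/-! Common definitions: distances on maps/homeomorphisms of a metric space,
topological stability and shadowing-type properties. -/

variable {X : Type*} [MetricSpace X]

namespace SPSAux

/-- `(f.toEquiv ^ (n : ℤ))` agrees with iteration for natural `n`. -/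
lemma pow_nat (f : X ≃ₜ X) (n : ℕ) (x : X) :
    (f.toEquiv ^ ((n : ℕ) : ℤ)) x = (f : X → X)^[n] x := by
  induction n generalizing x with
  | zero => simp
  | succ k ih =>
    have h1 : ((k : ℤ) + 1) = (((k + 1 : ℕ)) : ℤ) := by push_cast; ring
    rw [← h1, zpow_add, zpow_one, Equiv.Perm.mul_apply]
    show (f.toEquiv ^ (k : ℤ)) (f x) = _
    rw [ih (f x), Function.iterate_succ_apply]

lemma pow_add_apply (f : X ≃ₜ X) (a b : ℤ) (x : X) :
    (f.toEquiv ^ (a + b)) x = (f.toEquiv ^ a) ((f.toEquiv ^ b) x) := by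
  rw [zpow_add, Equiv.Perm.mul_apply]

lemma pow_neg_nat (f : X ≃ₜ X) (k l : ℕ) (hkl : k ≤ l) (x : X) :
    (f.toEquiv ^ (-(k : ℤ))) ((f : X → X)^[l] x) = (f : X → X)^[l - k] x := by
  rw [← pow_nat f l x, ← pow_add_apply]
  have : (-(k : ℤ) + l) = ((l - k : ℕ) : ℤ) := by
    have := Nat.cast_sub (R := ℤ) hkl; omega
  rw [this, pow_nat]

lemma pow_neg_cancel (f : X ≃ₜ X) (k : ℕ) (x : X) :
    (f.toEquiv ^ (-(k : ℤ))) ((f : X → X)^[k] x) = x := by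
  simpa using pow_neg_nat f k k le_rfl x

/-- One step relation: all `f`-iterates are `r`-close. -/
def Rl (f : X ≃ₜ X) (r : ℝ) (a b : X) : Prop :=
  ∀ n : ℤ, dist ((f.toEquiv ^ n) a) ((f.toEquiv ^ n) b) ≤ r

/-- chain relation -/
def Chn (f : X ≃ₜ X) (r : ℝ) (x y : X) : Prop :=
  ∃ (s : ℕ) (z : ℕ → X), z 0 = x ∧ z s = y ∧ ∀ i < s, Rl f r (z i) (z (i + 1))

variable {f : X ≃ₜ X} {r : ℝ}

lemma Rl.symm {a b : X} (h : Rl f r a b) : Rl f r b a := fun n => by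
  rw [dist_comm]; exact h n

lemma Rl.dist_le {a b : X} (h : Rl f r a b) : dist a b ≤ r := by
  simpa using h 0

lemma Rl.lift {a b : X} (h : Rl f r a b) : Rl f r (f a) (f b) := by
  intro n
  have h1 : ∀ c : X, (f.toEquiv ^ n) (f c) = (f.toEquiv ^ (n + 1)) c := by
    intro c
    rw [pow_add_apply, zpow_one]
    rfl
  rw [h1, h1]; exact h (n + 1)

lemma Rl.lift_symm {a b : X} (h : Rl f r a b) : Rl f r (f.symm a) (f.symm b) := by
  intro n
  have h1 : ∀ c : X, (f.toEquiv ^ n) (f.symm c) = (f.toEquiv ^ (n - 1)) c := by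
    intro c
    conv_lhs => rw [show n = (n - 1) + 1 by ring, pow_add_apply, zpow_one]
    show (f.toEquiv ^ (n-1)) (f (f.symm c)) = _
    rw [Homeomorph.apply_symm_apply]
  rw [h1, h1]; exact h (n - 1)

lemma chn_refl (x : X) : Chn f r x x := ⟨0, fun _ => x, rfl, rfl, by omega⟩

lemma chn_single {a b : X} (h : Rl f r a b) : Chn f r a b := by
  refine ⟨1, fun i => if i = 0 then a else b, by simp, by simp, ?_⟩
  intro i hi
  have : i = 0 := by omega
  subst this
  simpa using h

lemma chn_trans {x y z : X} (h1 : Chn f r x y) (h2 : Chn f r y z) : Chn f r x z := by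
  obtain ⟨s1, w1, h10, h11, h1s⟩ := h1
  obtain ⟨s2, w2, h20, h21, h2s⟩ := h2
  refine ⟨s1 + s2, fun i => if i < s1 then w1 i else w2 (i - s1), ?_, ?_, ?_⟩
  · by_cases h : 0 < s1
    · simpa [h] using h10
    · have hs1 : s1 = 0 := by omega
      simp only [if_neg (by omega : ¬ (0:ℕ) < s1)]
      rw [Nat.zero_sub, h20, ← h11, hs1, h10]
  · simp only [if_neg (by omega : ¬ s1 + s2 < s1)]
    rw [Nat.add_sub_cancel_left, h21]
  · intro i hi
    rcases lt_trichotomy (i + 1) s1 with h | h | h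
    · have hi1 : i < s1 := by omega
      simp only [if_pos hi1, if_pos h]
      exact h1s i (by omega)
    · have hi1 : i < s1 := by omega
      simp only [if_pos hi1, if_neg (by omega : ¬ i + 1 < s1)]
      rw [show i + 1 - s1 = 0 by omega, h20, ← h11, ← h]
      exact h1s i (by omega)
    · have hi1 : ¬ i < s1 := by omega
      simp only [if_neg hi1, if_neg (by omega : ¬ i + 1 < s1)]
      rw [show i + 1 - s1 = (i - s1) + 1 by omega]
      exact h2s (i - s1) (by omega)

lemma chn_symm {x y : X} (h : Chn f r x y) : Chn f r y x := by
  obtain ⟨s, w, h0, h1, hs⟩ := h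
  refine ⟨s, fun i => w (s - i), by simpa using h1, by simpa using h0, ?_⟩
  intro i hi
  have h2 := hs (s - (i + 1)) (by omega)
  rw [show s - (i + 1) + 1 = s - i by omega] at h2
  exact h2.symm

lemma chn_map (g : X → X) (hg : ∀ a b : X, Rl f r a b → Rl f r (g a) (g b))
    {x y : X} (h : Chn f r x y) : Chn f r (g x) (g y) := by
  obtain ⟨s, w, h0, h1, hs⟩ := h
  exact ⟨s, fun i => g (w i), by simp only [h0], by simp only [h1], fun i hi => hg _ _ (hs i hi)⟩

lemma chn_lift {x y : X} (h : Chn f r x y) : Chn f r (f x) (f y) :=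
  chn_map f (fun _ _ hr => hr.lift) h

lemma chn_lift_symm {x y : X} (h : Chn f r x y) : Chn f r (f.symm x) (f.symm y) :=
  chn_map f.symm (fun _ _ hr => hr.lift_symm) h

lemma chn_lift_iter (n : ℕ) {x y : X} (h : Chn f r x y) :
    Chn f r ((f : X → X)^[n] x) ((f : X → X)^[n] y) := by
  induction n with
  | zero => simpa using h
  | succ k ih =>
    rw [Function.iterate_succ_apply', Function.iterate_succ_apply']
    exact chn_lift ih

lemma chn_cancel (n : ℕ) {x y : X}
    (h : Chn f r ((f : X → X)^[n] x) ((f : X → X)^[n] y)) : Chn f r x y := by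
  induction n with
  | zero => simpa using h
  | succ k ih =>
    rw [Function.iterate_succ_apply', Function.iterate_succ_apply'] at h
    have h2 := chn_lift_symm h
    rw [Homeomorph.symm_apply_apply, Homeomorph.symm_apply_apply] at h2
    exact ih h2

lemma chn_multiples {b : X} {n : ℕ} (h : Chn f r b ((f : X → X)^[n] b)) :
    ∀ k : ℕ, Chn f r b ((f : X → X)^[k * n] b) := by
  intro k
  induction k with
  | zero => simpa using chn_refl b
  | succ j ih =>
    have h2 := chn_lift_iter (j * n) h
    rw [← Function.iterate_add_apply] at h2
    rw [show (j + 1) * n = j * n + n by ring]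
    exact chn_trans ih h2

/-- Almost periodicity via pigeonhole. -/
lemma lemA [CompactSpace X] (f : X ≃ₜ X) (hf : EquicontinuousHomeo f) :
    ∀ δ > (0:ℝ), ∃ m : ℕ, 1 ≤ m ∧ ∀ x : X, dist ((f : X → X)^[m] x) x ≤ δ := by
  classical
  intro δ hδ
  obtain ⟨η, hηpos, hmod⟩ := hf (δ / 3) (by positivity)
  set β : ℝ := min η (δ / 3) / 2 with hβ
  have hβpos : 0 < β := by positivity
  obtain ⟨t, ht⟩ := IsCompact.elim_finite_subcover (isCompact_univ (X := X))
    (fun c : X => Metric.ball c β) (fun _ => Metric.isOpen_ball)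
    (fun z _ => Set.mem_iUnion.mpr ⟨z, Metric.mem_ball_self hβpos⟩)
  have hmem : ∀ y : X, ∃ c ∈ t, y ∈ Metric.ball c β := by
    intro y
    have := ht (Set.mem_univ y)
    simpa using this
  -- pigeonhole on maps t → t
  let Φ : ℕ → ({c // c ∈ t} → {c // c ∈ t}) := fun n c =>
    ⟨(hmem ((f : X → X)^[n] c.1)).choose, (hmem ((f : X → X)^[n] c.1)).choose_spec.1⟩
  have hΦ : ∀ n c, dist ((f : X → X)^[n] (c : {c // c ∈ t}).1) (Φ n c).1 < β := by
    intro n c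
    exact (hmem ((f : X → X)^[n] c.1)).choose_spec.2
  obtain ⟨a, b, hab, heq⟩ := Finite.exists_ne_map_eq_of_infinite Φ
  have core : ∀ k l : ℕ, k < l → Φ k = Φ l →
      ∃ m : ℕ, 1 ≤ m ∧ ∀ x : X, dist ((f : X → X)^[m] x) x ≤ δ := by
    intro k l hkl hΦeq
    refine ⟨l - k, by omega, ?_⟩
    intro x
    obtain ⟨c, hct, hcx⟩ := hmem x
    have hxc : dist x c ≤ η := le_trans (le_of_lt hcx) (by rw [hβ]; have := min_le_left η (δ/3); linarith)
    have hkc : dist ((f : X → X)^[k] c) ((f : X → X)^[l] c) ≤ η := by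
      have h1 := hΦ k ⟨c, hct⟩
      have h2 := hΦ l ⟨c, hct⟩
      rw [hΦeq] at h1
      calc dist ((f : X → X)^[k] c) ((f : X → X)^[l] c)
          ≤ dist ((f : X → X)^[k] c) (Φ l ⟨c, hct⟩).1 + dist ((f : X → X)^[l] c) (Φ l ⟨c, hct⟩).1 :=
            dist_triangle_right _ _ _
        _ ≤ β + β := by push_cast at h1 h2 ⊢; exact add_le_add (le_of_lt h1) (le_of_lt h2)
        _ ≤ η := by rw [hβ]; have := min_le_left η (δ/3); linarith
    have hc : dist c ((f : X → X)^[l - k] c) ≤ δ / 3 := by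
      have := hmod _ _ hkc (-(k : ℤ))
      rwa [pow_neg_cancel, pow_neg_nat f k l (le_of_lt hkl)] at this
    have hx : dist ((f : X → X)^[l - k] x) ((f : X → X)^[l - k] c) ≤ δ / 3 := by
      have := hmod _ _ hxc (((l - k : ℕ) : ℤ))
      rwa [pow_nat, pow_nat] at this
    calc dist ((f : X → X)^[l - k] x) x
        ≤ dist ((f : X → X)^[l - k] x) ((f : X → X)^[l - k] c) + dist ((f : X → X)^[l - k] c) c + dist c x := dist_triangle4 _ _ _ _
      _ ≤ δ / 3 + δ / 3 + δ / 3 := by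
          refine add_le_add (add_le_add hx (by rw [dist_comm]; exact hc)) ?_
          rw [dist_comm]
          have : dist x c ≤ β := le_of_lt hcx
          have h3 : β ≤ δ / 3 := by rw [hβ]; have := min_le_right η (δ/3); linarith
          linarith
      _ = δ := by ring
  rcases lt_or_gt_of_ne hab with h | h
  · exact core a b h heq
  · exact core b a h heq.symm

/-- All multiples of some `m` are uniformly close to the identity. -/
lemma lemC [CompactSpace X] (f : X ≃ₜ X) (hf : EquicontinuousHomeo f)
    (hsps : StrictPeriodicShadowing f) :
    ∀ α > (0:ℝ), ∃ m : ℕ, 1 ≤ m ∧ ∀ (x : X) (j : ℕ),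
      dist ((f : X → X)^[j * m] x) x ≤ α := by
  intro α hα
  obtain ⟨η, hηpos, hmod⟩ := hf (α / 2) (by positivity)
  set ε₂ : ℝ := min (α / 2) η with hε₂
  have hε₂pos : 0 < ε₂ := by positivity
  obtain ⟨δ, hδpos, hδ⟩ := hsps ε₂ hε₂pos
  obtain ⟨m, hm1, hm⟩ := lemA f hf δ hδpos
  refine ⟨m, hm1, ?_⟩
  intro x j
  set c : ℕ → X := fun i => if i = m then x else (f : X → X)^[i] x with hcdef
  have hjump : ∀ i < m, dist (f (c i)) (c (i + 1)) ≤ δ := by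
    intro i hi
    by_cases h : i + 1 = m
    · simp only [hcdef, if_neg (by omega : ¬ i = m), if_pos h]
      have he : f ((f : X → X)^[i] x) = (f : X → X)^[i+1] x := (Function.iterate_succ_apply' _ i x).symm
      rw [he, h]
      exact hm x
    · simp only [hcdef, if_neg (by omega : ¬ i = m), if_neg h]
      have he : f ((f : X → X)^[i] x) = (f : X → X)^[i+1] x := (Function.iterate_succ_apply' _ i x).symm
      rw [he]
      simp [le_of_lt hδpos]
  have hcyc : c 0 = c m := by
    simp only [hcdef, if_neg (by omega : ¬ (0:ℕ) = m), if_pos rfl]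
    simp
  obtain ⟨p, hp1, hp2⟩ := hδ m c hm1 hjump hcyc
  · have hxp : dist x p ≤ ε₂ := by
      have := hp2 0 (by omega)
      simpa [hcdef, if_neg (by omega : ¬ (0:ℕ) = m)] using this
    have hper : (f : X → X)^[j * m] p = p := by
      rw [mul_comm, Function.iterate_mul]
      exact Function.iterate_fixed hp1 j
    have h1 : dist ((f : X → X)^[j * m] x) ((f : X → X)^[j * m] p) ≤ α / 2 := by
      have := hmod _ _ (le_trans hxp (min_le_right _ _)) (((j * m : ℕ)) : ℤ)
      rwa [pow_nat, pow_nat] at this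
    calc dist ((f : X → X)^[j * m] x) x
        ≤ dist ((f : X → X)^[j * m] x) ((f : X → X)^[j * m] p) + dist ((f : X → X)^[j * m] p) x :=
          dist_triangle _ _ _
      _ ≤ α / 2 + ε₂ := by
          refine add_le_add h1 ?_
          rw [hper, dist_comm]; exact hxp
      _ ≤ α := by have := min_le_left (α/2) η; rw [hε₂] at *; linarith [min_le_left (α/2) η]
/-- Points joined by a fine chain are uniformly close (key diameter bound). -/
lemma lemD [CompactSpace X] (f : X ≃ₜ X) (hf : EquicontinuousHomeo f)
    (hsps : StrictPeriodicShadowing f) :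
    ∀ θ > (0:ℝ), ∃ r > (0:ℝ), ∀ x y : X, Chn f r x y → dist x y ≤ 4 * θ := by
  intro θ hθ
  obtain ⟨δ1, hδ1pos, hSPS⟩ := hsps θ hθ
  set δ : ℝ := min δ1 θ with hδdef
  have hδpos : 0 < δ := by positivity
  obtain ⟨m, hm1, hmC⟩ := lemC f hf hsps (δ / 2) (by positivity)
  have hm0 : 0 < m := hm1
  refine ⟨δ / 2, by positivity, ?_⟩
  rintro x y ⟨s, z, hz0, hzs, hstep⟩
  rcases Nat.eq_zero_or_pos s with hs0 | hs1
  · have : x = y := by rw [← hz0, ← hzs, hs0]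
    rw [this, dist_self]; positivity
  set k : ℕ := 2 * s with hk
  set w : ℕ → X := fun i => if i ≤ s then z i else z (2 * s - i) with hw
  have hw0 : w 0 = x := by simp [hw, hz0]
  have hws : w s = y := by simp [hw, hzs]
  have hwk : w k = x := by
    simp only [hw, hk]
    rw [if_neg (by omega : ¬ 2 * s ≤ s)]
    rw [show 2 * s - 2 * s = 0 by omega, hz0]
  have hwstep : ∀ q < k, dist (w q) (w (q + 1)) ≤ δ / 2 := by
    intro q hq
    by_cases h1 : q + 1 ≤ s
    · have h2 : q ≤ s := by omega
      simp only [hw, if_pos h2, if_pos h1]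
      exact (hstep q (by omega)).dist_le
    · by_cases h3 : q ≤ s
      · have hq_eq : q = s := by omega
        simp only [hw, if_pos h3, if_neg h1]
        subst hq_eq
        rw [show 2 * q - (q + 1) = q - 1 by omega]
        have h4 := (hstep (q - 1) (by omega)).dist_le
        rw [show q - 1 + 1 = q by omega] at h4
        rw [dist_comm]; exact h4
      · simp only [hw, if_neg h3, if_neg h1]
        have h4 := (hstep (2 * s - (q + 1)) (by omega)).dist_le
        rw [show 2 * s - (q + 1) + 1 = 2 * s - q by omega] at h4
        rw [dist_comm]; exact h4
  set c : ℕ → X := fun i => (f : X → X)^[i % m] (w (i / m)) with hc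
  have hc0 : c 0 = x := by simp [hc, hw0]
  have hckm : c (k * m) = x := by
    simp only [hc]
    rw [Nat.mul_mod_left, Nat.mul_div_cancel _ hm0]
    simpa using hwk
  have hjump : ∀ i < k * m, dist (f (c i)) (c (i + 1)) ≤ δ1 := by
    intro i hi
    have htm : i % m < m := Nat.mod_lt _ hm0
    have hqk : i / m < k := (Nat.div_lt_iff_lt_mul hm0).2 hi
    have hdm := Nat.div_add_mod i m
    by_cases hEnd : i % m + 1 = m
    · have hrep : i + 1 = m * (i / m + 1) := by rw [Nat.mul_add, Nat.mul_one]; omega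
      have hdiv : (i + 1) / m = i / m + 1 := by rw [hrep, Nat.mul_div_cancel_left _ hm0]
      have hmod2 : (i + 1) % m = 0 := by rw [hrep, Nat.mul_mod_right]
      simp only [hc]
      rw [hdiv, hmod2, Function.iterate_zero_apply]
      have he : f ((f : X → X)^[i % m] (w (i / m))) = (f : X → X)^[i % m + 1] (w (i / m)) :=
        (Function.iterate_succ_apply' _ _ _).symm
      rw [he, hEnd]
      have hC := hmC (w (i / m)) 1
      rw [one_mul] at hC
      have hW := hwstep (i / m) hqk
      calc dist ((f : X → X)^[m] (w (i / m))) (w (i / m + 1))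
          ≤ dist ((f : X → X)^[m] (w (i / m))) (w (i / m)) + dist (w (i / m)) (w (i / m + 1)) :=
            dist_triangle _ _ _
        _ ≤ δ / 2 + δ / 2 := add_le_add hC hW
        _ ≤ δ1 := by rw [hδdef] at *; have := min_le_left δ1 θ; linarith
    · have hlt : i % m + 1 < m := by omega
      have hrep : i + 1 = m * (i / m) + (i % m + 1) := by omega
      have hdiv : (i + 1) / m = i / m := by
        rw [hrep, Nat.mul_add_div hm0, Nat.div_eq_of_lt hlt, Nat.add_zero]
      have hmod2 : (i + 1) % m = i % m + 1 := by
        rw [hrep, Nat.mul_add_mod, Nat.mod_eq_of_lt hlt]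
      simp only [hc]
      rw [hdiv, hmod2]
      have he : f ((f : X → X)^[i % m] (w (i / m))) = (f : X → X)^[i % m + 1] (w (i / m)) :=
        (Function.iterate_succ_apply' _ _ _).symm
      rw [he, dist_self]
      exact le_of_lt hδ1pos
  obtain ⟨p, hp1, hp2⟩ := hSPS (k * m) c (Nat.mul_pos (by omega) hm0) hjump (hc0.trans hckm.symm)
  have h1 : dist x p ≤ θ := by
    have := hp2 0 (Nat.zero_le _)
    rwa [hc0, Function.iterate_zero_apply] at this
  have h2 : dist y ((f : X → X)^[s * m] p) ≤ θ := by
    have hsm : c (s * m) = y := by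
      simp only [hc]
      rw [Nat.mul_mod_left, Nat.mul_div_cancel _ hm0, Function.iterate_zero_apply, hws]
    have := hp2 (s * m) (Nat.mul_le_mul_right _ (by omega))
    rwa [hsm] at this
  have h3 : dist ((f : X → X)^[s * m] p) p ≤ δ / 2 := hmC p s
  have hδθ : δ ≤ θ := min_le_right _ _
  calc dist x y ≤ dist x p + dist p ((f : X → X)^[s * m] p) + dist ((f : X → X)^[s * m] p) y :=
        dist_triangle4 _ _ _ _
    _ ≤ θ + δ / 2 + θ := by
        refine add_le_add (add_le_add h1 (by rw [dist_comm]; exact h3)) (by rw [dist_comm]; exact h2)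
    _ ≤ 4 * θ := by linarith

/-- every point returns chain-close to itself. -/
lemma exists_return [CompactSpace X] (f : X ≃ₜ X) (hf : EquicontinuousHomeo f)
    (r : ℝ) (hr : 0 < r) (x : X) :
    ∃ n : ℕ, 1 ≤ n ∧ Chn f r x ((f : X → X)^[n] x) := by
  classical
  obtain ⟨η, hηpos, hmod⟩ := hf r hr
  obtain ⟨t, ht⟩ := IsCompact.elim_finite_subcover (isCompact_univ (X := X))
    (fun c : X => Metric.ball c η) (fun _ => Metric.isOpen_ball)
    (fun z _ => Set.mem_iUnion.mpr ⟨z, Metric.mem_ball_self hηpos⟩)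
  have hmem : ∀ y : X, ∃ c ∈ t, y ∈ Metric.ball c η := by
    intro y
    have := ht (Set.mem_univ y)
    simpa using this
  let Φ : ℕ → {c // c ∈ t} := fun n =>
    ⟨(hmem ((f : X → X)^[n] x)).choose, (hmem ((f : X → X)^[n] x)).choose_spec.1⟩
  have hΦ : ∀ n, dist ((f : X → X)^[n] x) (Φ n).1 < η := fun n =>
    (hmem ((f : X → X)^[n] x)).choose_spec.2
  obtain ⟨a, b, hab, heq⟩ := Finite.exists_ne_map_eq_of_infinite Φ
  have core : ∀ u v : ℕ, u < v → Φ u = Φ v →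
      ∃ n : ℕ, 1 ≤ n ∧ Chn f r x ((f : X → X)^[n] x) := by
    intro u v huv hΦeq
    have h1 : Rl f r ((f : X → X)^[u] x) (Φ v).1 := by
      have := hΦ u
      rw [hΦeq] at this
      exact hmod _ _ (le_of_lt this)
    have h2 : Rl f r ((f : X → X)^[v] x) (Φ v).1 := hmod _ _ (le_of_lt (hΦ v))
    have h3 : Chn f r ((f : X → X)^[u] x) ((f : X → X)^[v] x) :=
      chn_trans (chn_single h1) (chn_single h2.symm)
    rw [show v = u + (v - u) by omega, Function.iterate_add_apply] at h3
    exact ⟨v - u, by omega, chn_cancel u h3⟩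
  rcases lt_or_gt_of_ne hab with h | h
  · exact core a b h heq
  · exact core b a h heq.symm

/-- pointwise distance is below the C0 sup-distance. -/
lemma dist_le_dC0' [CompactSpace X] (F G : X → X) (x : X) :
    dist (F x) (G x) ≤ ⨆ y : X, dist (F y) (G y) := by
  obtain ⟨C, hC⟩ := Metric.isBounded_iff.1 (isCompact_univ (X := X)).isBounded
  refine le_ciSup (f := fun y => dist (F y) (G y)) ⟨C, ?_⟩ x
  rintro v ⟨y, rfl⟩
  exact hC (Set.mem_univ _) (Set.mem_univ _)

end SPSAux

open SPSAux in
/-- An equicontinuous homeomorphism of a compact metric space with the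
strict periodic shadowing property is topologically stable, and the space is
totally disconnected (zero-dimensional). -/
theorem topologicallyStable_of_equicontinuous_strictPeriodicShadowing
    {X : Type*} [MetricSpace X] [CompactSpace X] (f : X ≃ₜ X)
    (hf : EquicontinuousHomeo f) (hsps : StrictPeriodicShadowing f) :
    TopologicallyStable f ∧ TotallyDisconnectedSpace X := by
  classical
  constructor
  · -- Topological stability
    intro ε hε
    obtain ⟨η₁, hη₁pos, hη₁⟩ := hf (ε / 3) (by positivity)
    set ε₂ : ℝ := min (ε / 3) η₁ with hε₂def
    have hε₂pos : 0 < ε₂ := by positivity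
    obtain ⟨δs, hδspos, hδs⟩ := hsps ε₂ hε₂pos
    set δ₀ : ℝ := min δs ε₂ with hδ₀def
    have hδ₀pos : 0 < δ₀ := by positivity
    obtain ⟨r, hrpos, hD⟩ := lemD f hf hsps (δ₀ / 4) (by positivity)
    have hD' : ∀ x y : X, Chn f r x y → dist x y ≤ δ₀ := by
      intro x y hxy
      have := hD x y hxy
      linarith
    obtain ⟨ηr, hηrpos, hηr⟩ := hf r hrpos
    refine ⟨ηr, hηrpos, ?_⟩
    intro g hg
    have hgf : ∀ x : X, Rl f r ((g : X → X) x) ((f : X → X) x) := by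
      intro x
      have h3 : dC0 (f : X → X) (g : X → X) < ηr := lt_of_le_of_lt (le_max_left _ _) hg
      have h1 : dist ((g : X → X) x) ((f : X → X) x) ≤ ηr := by
        rw [dist_comm]
        exact le_trans (dist_le_dC0' (f : X → X) (g : X → X) x) (le_of_lt h3)
      exact hηr _ _ h1
    have hex : ∀ x : X, ∃ n, 1 ≤ n ∧ Chn f r x ((f : X → X)^[n] x) :=
      exists_return f hf r hrpos
    set E : X → X → Prop := fun a b => ∃ j : ℕ, Chn f r ((f : X → X)^[j] a) b with hEdef
    have hErefl : ∀ x, E x x := fun x => ⟨0, by simpa using chn_refl x⟩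
    have hEtrans : ∀ {a b c : X}, E a b → E b c → E a c := by
      rintro a b c ⟨j, hj⟩ ⟨i, hi⟩
      refine ⟨i + j, ?_⟩
      rw [Function.iterate_add_apply]
      exact chn_trans (chn_lift_iter i hj) hi
    have hEsymm : ∀ {a b : X}, E a b → E b a := by
      rintro a b ⟨j, hj⟩
      obtain ⟨n, hn1, hn⟩ := hex a
      refine ⟨j * n - j, ?_⟩
      have h1 := chn_lift_iter (j * n - j) (chn_symm hj)
      rw [← Function.iterate_add_apply] at h1
      have hjn : j ≤ j * n := Nat.le_mul_of_pos_right j (by omega)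
      rw [Nat.sub_add_cancel hjn] at h1
      exact chn_trans h1 (chn_symm (chn_multiples hn j))
    set rep : X → X := fun x => @Classical.epsilon X ⟨x⟩ (fun b => E b x) with hrepdef
    have hrep1 : ∀ x, E (rep x) x := by
      intro x
      exact @Classical.epsilon_spec X (fun b => E b x) ⟨x, hErefl x⟩
    have hrep2 : ∀ x y : X, E x y → rep x = rep y := by
      intro x y hxy
      have hpred : (fun b => E b x) = (fun b => E b y) := by
        funext b
        exact propext ⟨fun hh => hEtrans hh hxy, fun hh => hEtrans hh (hEsymm hxy)⟩
      simp only [hrepdef]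
      exact congrArg _ hpred
    set L : X → ℕ := fun b => Nat.find (hex b) with hLdef
    have hL : ∀ b, 1 ≤ L b ∧ Chn f r b ((f : X → X)^[L b] b) := fun b => Nat.find_spec (hex b)
    have hLmin : ∀ b n, 1 ≤ n → Chn f r b ((f : X → X)^[n] b) → L b ≤ n :=
      fun b n h1 h2 => Nat.find_min' (hex b) ⟨h1, h2⟩
    have hper : ∀ b : X, ∃ p, (f : X → X)^[L b] p = p ∧ dist b p ≤ ε₂ := by
      intro b
      have hb1 : 1 ≤ L b := (hL b).1
      have hd : dist ((f : X → X)^[L b] b) b ≤ δ₀ := by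
        have := hD' b _ (hL b).2
        rwa [dist_comm] at this
      set c : ℕ → X := fun i => if i = L b then b else (f : X → X)^[i] b with hcdef
      have hjump : ∀ i < L b, dist (f (c i)) (c (i + 1)) ≤ δs := by
        intro i hi
        by_cases hh : i + 1 = L b
        · simp only [hcdef, if_neg (by omega : ¬ i = L b), if_pos hh]
          have he : f ((f : X → X)^[i] b) = (f : X → X)^[i + 1] b :=
            (Function.iterate_succ_apply' _ i b).symm
          rw [he, hh]
          exact le_trans hd (min_le_left _ _)
        · simp only [hcdef, if_neg (by omega : ¬ i = L b), if_neg hh]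
          have he : f ((f : X → X)^[i] b) = (f : X → X)^[i + 1] b :=
            (Function.iterate_succ_apply' _ i b).symm
          rw [he, dist_self]
          exact le_of_lt hδspos
      have hcyc : c 0 = c (L b) := by
        simp only [hcdef, if_neg (by omega : ¬ (0:ℕ) = L b), if_pos rfl]
        simp
      obtain ⟨p, hp1, hp2⟩ := hδs (L b) c hb1 hjump hcyc
      refine ⟨p, hp1, ?_⟩
      have := hp2 0 (Nat.zero_le _)
      simpa [hcdef, if_neg (by omega : ¬ (0:ℕ) = L b)] using this
    set P : X → X := fun b => Classical.choose (hper b) with hPdef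
    have hP : ∀ b, (f : X → X)^[L b] (P b) = P b ∧ dist b (P b) ≤ ε₂ :=
      fun b => Classical.choose_spec (hper b)
    have hJex : ∀ x : X, ∃ j : ℕ, Chn f r ((f : X → X)^[j] (rep x)) x := fun x => hrep1 x
    set J : X → ℕ := fun x => Nat.find (hJex x) with hJdef
    have hJspec : ∀ x, Chn f r ((f : X → X)^[J x] (rep x)) x := fun x => Nat.find_spec (hJex x)
    have hJmin : ∀ x j, Chn f r ((f : X → X)^[j] (rep x)) x → J x ≤ j :=
      fun x j hj => Nat.find_min' (hJex x) hj
    set h : X → X := fun x => (f : X → X)^[J x] (P (rep x)) with hhdef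
    have hconst : ∀ x y : X, Chn f r x y → h x = h y := by
      intro x y hxy
      have hrepxy : rep x = rep y := hrep2 x y ⟨0, by simpa using hxy⟩
      have hJxy : J x = J y := by
        apply le_antisymm
        · apply hJmin
          rw [hrepxy]
          exact chn_trans (hJspec y) (chn_symm hxy)
        · apply hJmin
          rw [← hrepxy]
          exact chn_trans (hJspec x) hxy
      simp only [hhdef, hrepxy, hJxy]
    have hcont : Continuous h := by
      rw [continuous_iff_continuousAt]
      intro x
      have hev : ∀ᶠ y in nhds x, h y = h x := by
        filter_upwards [Metric.ball_mem_nhds x hηrpos] with y hy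
        have hdist : dist x y ≤ ηr := by
          rw [dist_comm]
          exact le_of_lt hy
        exact (hconst x y (chn_single (hηr _ _ hdist))).symm
      exact continuousAt_const.congr (Filter.EventuallyEq.symm hev)
    have hclose : ∀ x : X, dist (h x) x ≤ 2 * (ε / 3) := by
      intro x
      have h1 : dist ((f : X → X)^[J x] (P (rep x))) ((f : X → X)^[J x] (rep x)) ≤ ε / 3 := by
        have hd := (hP (rep x)).2
        have h2 := hη₁ _ _ (le_trans hd (min_le_right _ _)) ((J x : ℕ) : ℤ)
        rw [pow_nat, pow_nat] at h2
        rw [dist_comm]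
        exact h2
      have h2 : dist ((f : X → X)^[J x] (rep x)) x ≤ δ₀ := hD' _ _ (hJspec x)
      have hδ₀le : δ₀ ≤ ε / 3 := le_trans (min_le_right _ _) (min_le_left _ _)
      calc dist (h x) x
          ≤ dist (h x) ((f : X → X)^[J x] (rep x)) + dist ((f : X → X)^[J x] (rep x)) x :=
            dist_triangle _ _ _
        _ ≤ ε / 3 + δ₀ := add_le_add (by simpa [hhdef] using h1) h2
        _ ≤ 2 * (ε / 3) := by linarith
    have hconj : ∀ x : X, h ((g : X → X) x) = f (h x) := by
      intro x
      have hfg : Chn f r ((f : X → X) x) ((g : X → X) x) := chn_single (hgf x).symm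
      have hrepg : rep ((g : X → X) x) = rep x :=
        (hrep2 x _ ⟨1, by simpa using hfg⟩).symm
      have hp := hP (rep x)
      have hℓ1 : 1 ≤ L (rep x) := (hL (rep x)).1
      have hjx : Chn f r ((f : X → X)^[J x] (rep x)) x := hJspec x
      have hjℓ : J x < L (rep x) := by
        by_contra hcon
        push_neg at hcon
        have h1 : Chn f r ((f : X → X)^[J x - L (rep x)] (rep x)) ((f : X → X)^[J x] (rep x)) := by
          have h2 := chn_lift_iter (J x - L (rep x)) (hL (rep x)).2
          rw [← Function.iterate_add_apply] at h2
          rwa [show J x - L (rep x) + L (rep x) = J x by omega] at h2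
        have := hJmin x (J x - L (rep x)) (chn_trans h1 hjx)
        omega
      have hgx_mem : Chn f r ((f : X → X)^[J x + 1] (rep x)) ((g : X → X) x) := by
        have h1 := chn_lift hjx
        have he : f ((f : X → X)^[J x] (rep x)) = (f : X → X)^[J x + 1] (rep x) :=
          (Function.iterate_succ_apply' _ _ _).symm
        rw [he] at h1
        exact chn_trans h1 hfg
      rcases Nat.eq_zero_or_pos (J ((g : X → X) x)) with h0 | h1
      · -- wrap-around case
        have hb_gx : Chn f r (rep x) ((g : X → X) x) := by
          have := hJspec ((g : X → X) x)
          rwa [hrepg, h0, Function.iterate_zero_apply] at this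
        have hb_fx : Chn f r (rep x) ((f : X → X) x) := chn_trans hb_gx (chn_symm hfg)
        have h2 : Chn f r (f.symm (rep x)) x := by
          have := chn_lift_symm hb_fx
          rwa [Homeomorph.symm_apply_apply] at this
        have h3 : Chn f r (f.symm (rep x)) ((f : X → X)^[L (rep x) - 1] (rep x)) := by
          have h4 := chn_lift_symm (hL (rep x)).2
          rw [show (f : X → X)^[L (rep x)] (rep x)
              = f ((f : X → X)^[L (rep x) - 1] (rep x)) by
            conv_lhs => rw [show L (rep x) = (L (rep x) - 1) + 1 by omega,
              Function.iterate_succ_apply']] at h4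
          rwa [Homeomorph.symm_apply_apply] at h4
        have h4 : Chn f r ((f : X → X)^[L (rep x) - 1] (rep x)) x :=
          chn_trans (chn_symm h3) h2
        have h5 : J x ≤ L (rep x) - 1 := hJmin x _ h4
        have hj_eq : J x = L (rep x) - 1 := by
          by_contra hne
          have hjlt : J x < L (rep x) - 1 := by omega
          have h6 : Chn f r ((f : X → X)^[J x] (rep x))
              ((f : X → X)^[J x] ((f : X → X)^[L (rep x) - 1 - J x] (rep x))) := by
            rw [← Function.iterate_add_apply]
            rw [show J x + (L (rep x) - 1 - J x) = L (rep x) - 1 by omega]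
            exact chn_trans hjx (chn_symm h4)
          have h7 := chn_cancel (J x) h6
          have := hLmin (rep x) (L (rep x) - 1 - J x) (by omega) h7
          omega
        show (f : X → X)^[J ((g : X → X) x)] (P (rep ((g : X → X) x)))
            = f ((f : X → X)^[J x] (P (rep x)))
        rw [hrepg, h0, Function.iterate_zero_apply]
        have he : f ((f : X → X)^[J x] (P (rep x))) = (f : X → X)^[J x + 1] (P (rep x)) :=
          (Function.iterate_succ_apply' _ _ _).symm
        rw [he, hj_eq, show L (rep x) - 1 + 1 = L (rep x) by omega]
        exact (hp.1).symm
      · -- interior case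
        have hspec' : Chn f r ((f : X → X)^[J ((g : X → X) x)] (rep x)) ((g : X → X) x) := by
          have := hJspec ((g : X → X) x)
          rwa [hrepg] at this
        have h2 : Chn f r ((f : X → X)^[J ((g : X → X) x) - 1] (rep x)) x := by
          have h3 := chn_trans hspec' (chn_symm hfg)
          have h4 := chn_lift_symm h3
          rw [show (f : X → X)^[J ((g : X → X) x)] (rep x)
              = f ((f : X → X)^[J ((g : X → X) x) - 1] (rep x)) by
            conv_lhs => rw [show J ((g : X → X) x) = (J ((g : X → X) x) - 1) + 1 by omega,
              Function.iterate_succ_apply']] at h4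
          rw [Homeomorph.symm_apply_apply, Homeomorph.symm_apply_apply] at h4
          exact h4
        have h5 : J x ≤ J ((g : X → X) x) - 1 := hJmin x _ h2
        have hJle : J ((g : X → X) x) ≤ J x + 1 := by
          apply hJmin
          rw [hrepg]
          exact hgx_mem
        have hJg : J ((g : X → X) x) = J x + 1 := by omega
        show (f : X → X)^[J ((g : X → X) x)] (P (rep ((g : X → X) x)))
            = f ((f : X → X)^[J x] (P (rep x)))
        rw [hrepg, hJg]
        exact Function.iterate_succ_apply' _ _ _
    refine ⟨h, hcont, ?_, ?_⟩
    · rcases isEmpty_or_nonempty X with hX | hX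
      · show (⨆ x : X, dist (h x) (id x)) < ε
        rw [Real.iSup_of_isEmpty]
        exact hε
      · show (⨆ x : X, dist (h x) (id x)) < ε
        refine lt_of_le_of_lt (ciSup_le fun x => ?_) (by linarith : 2 * (ε / 3) < ε)
        exact hclose x
    · funext x
      exact hconj x
  · -- Total disconnectedness
    rw [totallyDisconnectedSpace_iff_connectedComponent_singleton]
    intro x
    apply Set.eq_singleton_iff_unique_mem.mpr
    refine ⟨mem_connectedComponent, ?_⟩
    intro y hy
    have key : ∀ θ : ℝ, 0 < θ → dist y x ≤ 4 * θ := by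
      intro θ hθ
      obtain ⟨r, hrpos, hD⟩ := lemD f hf hsps θ hθ
      obtain ⟨ηr, hηrpos, hηr⟩ := hf r hrpos
      set U : Set X := {z | Chn f r x z} with hU
      have hopen : IsOpen U := by
        rw [Metric.isOpen_iff]
        intro z hz
        refine ⟨ηr, hηrpos, ?_⟩
        intro w hw
        have hdist : dist z w ≤ ηr := by
          rw [dist_comm]
          exact le_of_lt hw
        exact chn_trans hz (chn_single (hηr _ _ hdist))
      have hclosed : IsClosed U := by
        rw [← isOpen_compl_iff, Metric.isOpen_iff]
        intro z hz
        refine ⟨ηr, hηrpos, ?_⟩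
        intro w hw
        simp only [Set.mem_compl_iff]
        intro hwU
        exact hz (chn_trans hwU (chn_single (hηr _ _ (le_of_lt hw))))
      have hsub := IsClopen.connectedComponent_subset ⟨hclosed, hopen⟩
        (show x ∈ U from chn_refl x)
      have hyU : y ∈ U := hsub hy
      have := hD x y hyU
      rw [dist_comm]
      exact this
    have hle : dist y x ≤ 0 := by
      apply le_of_forall_pos_le_add
      intro ν hν
      have := key (ν / 4) (by positivity)
      linarith
    exact dist_le_zero.1 hle
end
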